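/- arXiv:2502.13231 — 4 statements merged into one kernel-verified Lean document; each statement's English description precedes it below -/
import Mathlib

section
/- Bonami's lemma: if f : {-1,1}ⁿ → ℝ is a multilinear polynomial of degree at most d, then E[f⁴] ≤ 9^d (E[f²])², equivalently ‖f‖₄ ≤ 3^{d/2} ‖f‖₂. -/
open Finset Function

noncomputable section

/-- Expectation with respect to the uniform measure on the Hamming cube,
encoded as `Fin n → Bool` (`true ↦ 1`, `false ↦ -1`). -/
def expec {n : ℕ} (f : (Fin n → Bool) → ℝ) : ℝ :=
  (∑ x : Fin n → Bool, f x) / 2 ^ n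

/-- The character χ_S. -/
def chi {n : ℕ} (S : Finset (Fin n)) (x : Fin n → Bool) : ℝ :=
  ∏ i ∈ S, (if x i then (1 : ℝ) else -1)

/-- Fourier coefficient f̂(S) = E[f χ_S]. -/
def fcoef {n : ℕ} (f : (Fin n → Bool) → ℝ) (S : Finset (Fin n)) : ℝ :=
  expec (fun x => f x * chi S x)

/-- Influence of coordinate i: probability that flipping coordinate i changes f. -/
def infl {n : ℕ} (f : (Fin n → Bool) → ℝ) (i : Fin n) : ℝ :=
  expec (fun x => if f x ≠ f (Function.update x i (!(x i))) then (1 : ℝ) else 0)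

/-- Total influence. -/
def totalInfl {n : ℕ} (f : (Fin n → Bool) → ℝ) : ℝ :=
  ∑ i : Fin n, infl f i

/-- The p-norm ‖f‖_p = (E[|f|^p])^{1/p}. -/
def pnorm {n : ℕ} (p : ℝ) (f : (Fin n → Bool) → ℝ) : ℝ :=
  (expec (fun x => |f x| ^ p)) ^ (1 / p)

/-- The discrete i-th derivative. -/
def deriv' {n : ℕ} (i : Fin n) (g : (Fin n → Bool) → ℝ) : (Fin n → Bool) → ℝ :=
  fun x => (g (Function.update x i true) - g (Function.update x i false)) / 2

/-- The noise operator T_ρ. -/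
def noiseOp {n : ℕ} (ρ : ℝ) (f : (Fin n → Bool) → ℝ) : (Fin n → Bool) → ℝ :=
  fun x => ∑ S : Finset (Fin n), ρ ^ S.card * fcoef f S * chi S x

end

noncomputable section BonamiAux
variable {n : ℕ}

lemma sum_pi_succ (F : (Fin (n+1) → Bool) → ℝ) :
    ∑ x : Fin (n+1) → Bool, F x
      = ∑ y : Fin n → Bool, (F (Fin.cons true y) + F (Fin.cons false y)) := by
  rw [← (Fin.consEquiv (fun _ : Fin (n+1) => Bool)).sum_comp F]
  rw [Fintype.sum_prod_type]
  simp only [Fintype.sum_bool, Fin.consEquiv_apply]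
  exact Finset.sum_add_distrib.symm

lemma expec_succ (F : (Fin (n+1) → Bool) → ℝ) :
    expec F = (expec (fun y => F (Fin.cons true y)) + expec (fun y => F (Fin.cons false y))) / 2 := by
  simp only [expec, sum_pi_succ, Finset.sum_add_distrib, pow_succ]
  ring

lemma chi_map_succ (T : Finset (Fin n)) (b : Bool) (y : Fin n → Bool) :
    chi (T.map (Fin.succEmb n)) (Fin.cons b y) = chi T y := by
  unfold chi
  rw [Finset.prod_map]
  simp [Fin.succEmb]

lemma chi_insert_zero (T : Finset (Fin n)) (b : Bool) (y : Fin n → Bool) :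
    chi (insert 0 (T.map (Fin.succEmb n))) (Fin.cons b y)
      = (if b then (1:ℝ) else -1) * chi T y := by
  unfold chi
  rw [Finset.prod_insert (by simp [Fin.succEmb, Fin.succ_ne_zero])]
  rw [Finset.prod_map]
  simp [Fin.succEmb]

variable {n : ℕ}

lemma fcoef_even (f : (Fin (n+1) → Bool) → ℝ) (T : Finset (Fin n)) :
    fcoef f (T.map (Fin.succEmb n))
      = fcoef (fun y => (f (Fin.cons true y) + f (Fin.cons false y)) / 2) T := by
  unfold fcoef
  rw [expec_succ]
  simp only [chi_map_succ]
  unfold expec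
  have h : ∀ y : Fin n → Bool, (f (Fin.cons true y) + f (Fin.cons false y)) / 2 * chi T y
      = (f (Fin.cons true y) * chi T y + f (Fin.cons false y) * chi T y) / 2 := fun y => by ring
  simp only [h]
  rw [← Finset.sum_div, Finset.sum_add_distrib]
  ring

lemma fcoef_odd (f : (Fin (n+1) → Bool) → ℝ) (T : Finset (Fin n)) :
    fcoef f (insert 0 (T.map (Fin.succEmb n)))
      = fcoef (fun y => (f (Fin.cons true y) - f (Fin.cons false y)) / 2) T := by
  unfold fcoef
  rw [expec_succ]
  simp only [chi_insert_zero]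
  unfold expec
  have h : ∀ y : Fin n → Bool, (f (Fin.cons true y) - f (Fin.cons false y)) / 2 * chi T y
      = (f (Fin.cons true y) * ((if true then (1:ℝ) else -1) * chi T y)
        + f (Fin.cons false y) * ((if false then (1:ℝ) else -1) * chi T y)) / 2 := fun y => by
    simp; ring
  simp only [h]
  rw [← Finset.sum_div, Finset.sum_add_distrib]
  ring

lemma chi_self_sum (x y : Fin n → Bool) :
    ∑ S : Finset (Fin n), chi S y * chi S x = if y = x then (2:ℝ)^n else 0 := by
  have key : ∀ S : Finset (Fin n), chi S y * chi S x
      = ∏ i ∈ S, ((if y i then (1:ℝ) else -1) * (if x i then (1:ℝ) else -1)) := by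
    intro S; rw [Finset.prod_mul_distrib]; rfl
  simp only [key]
  set a : Fin n → ℝ := fun i => (if y i then (1:ℝ) else -1) * (if x i then (1:ℝ) else -1) with ha
  have h1 : ∑ S : Finset (Fin n), ∏ i ∈ S, a i = ∏ i, (a i + 1) := by
    rw [Finset.prod_add a (fun _ => (1:ℝ)) Finset.univ, ← Finset.powerset_univ]
    simp
  rw [h1]
  by_cases hyx : y = x
  · subst hyx
    simp only [if_pos rfl]
    have : ∀ i : Fin n, a i + 1 = 2 := by
      intro i; simp only [ha]; cases y i <;> norm_num
    simp only [this]
    simp [Finset.prod_const]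
  · rw [if_neg hyx]
    obtain ⟨i, hi⟩ : ∃ i, y i ≠ x i := by
      by_contra hc
      push_neg at hc
      exact hyx (funext hc)
    apply Finset.prod_eq_zero (Finset.mem_univ i)
    simp only [ha]
    cases hy : y i <;> cases hx : x i <;> simp_all

variable {n : ℕ}

lemma expec_congr' {F G : (Fin n → Bool) → ℝ} (h : ∀ x, F x = G x) : expec F = expec G :=
  congrArg expec (funext h)

lemma expec_add (F G : (Fin n → Bool) → ℝ) :
    expec (fun x => F x + G x) = expec F + expec G := by
  unfold expec
  rw [Finset.sum_add_distrib, add_div]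

lemma expec_const_mul (c : ℝ) (F : (Fin n → Bool) → ℝ) :
    expec (fun x => c * F x) = c * expec F := by
  unfold expec
  rw [← Finset.mul_sum, mul_div_assoc]

lemma expec_nonneg {F : (Fin n → Bool) → ℝ} (h : ∀ x, 0 ≤ F x) : 0 ≤ expec F :=
  div_nonneg (Finset.sum_nonneg fun x _ => h x) (by positivity)

lemma expec_zero : expec (fun _ : Fin n → Bool => (0:ℝ)) = 0 := by
  simp [expec]

lemma fourier_inversion (g : (Fin n → Bool) → ℝ) (x : Fin n → Bool) :
    g x = ∑ S : Finset (Fin n), fcoef g S * chi S x := by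
  have h1 : ∀ S : Finset (Fin n), fcoef g S * chi S x
      = (∑ y : Fin n → Bool, g y * (chi S y * chi S x)) / 2^n := by
    intro S
    unfold fcoef expec
    rw [div_mul_eq_mul_div, Finset.sum_mul]
    congr 1
    exact Finset.sum_congr rfl fun y _ => by ring
  simp only [h1]
  rw [← Finset.sum_div, Finset.sum_comm]
  have h2 : ∀ y : Fin n → Bool, ∑ S : Finset (Fin n), g y * (chi S y * chi S x)
      = g y * (if y = x then (2:ℝ)^n else 0) := by
    intro y
    rw [← Finset.mul_sum, chi_self_sum]
  rw [Finset.sum_congr rfl fun y _ => h2 y]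
  simp only [mul_ite, mul_zero, Finset.sum_ite_eq', Finset.mem_univ, if_pos]
  field_simp


lemma bonami_main : ∀ (n d : ℕ) (f : (Fin n → Bool) → ℝ),
    (∀ S : Finset (Fin n), d < S.card → fcoef f S = 0) →
    expec (fun x => f x ^ 4) ≤ 9 ^ d * (expec (fun x => f x ^ 2)) ^ 2 := by
  intro n
  induction n with
  | zero =>
    intro d f _
    have e : ∀ F : (Fin 0 → Bool) → ℝ, expec F = F (fun i => i.elim0) := by
      intro F
      unfold expec
      rw [Fintype.sum_subsingleton _ (fun i : Fin 0 => i.elim0)]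
      simp
    rw [e, e]
    have h9 : (1:ℝ) ≤ 9 ^ d := one_le_pow₀ (by norm_num)
    nlinarith [sq_nonneg (f (fun i => i.elim0) ^ 2), sq_nonneg (f (fun i => i.elim0))]
  | succ n IH =>
    intro d f hdeg
    set h : (Fin n → Bool) → ℝ := fun y => (f (Fin.cons true y) + f (Fin.cons false y)) / 2 with hh
    set g : (Fin n → Bool) → ℝ := fun y => (f (Fin.cons true y) - f (Fin.cons false y)) / 2 with hg
    have hft : ∀ y, f (Fin.cons true y) = h y + g y := fun y => by rw [hh, hg]; ring
    have hff : ∀ y, f (Fin.cons false y) = h y - g y := fun y => by rw [hh, hg]; ring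
    -- degree of h
    have hdegh : ∀ T : Finset (Fin n), d < T.card → fcoef h T = 0 := by
      intro T hT
      rw [← fcoef_even]
      exact hdeg _ (by rwa [Finset.card_map])
    -- coefficient formula for g
    have hgcoef : ∀ T : Finset (Fin n), d < T.card + 1 → fcoef g T = 0 := by
      intro T hT
      rw [← fcoef_odd]
      apply hdeg
      rw [Finset.card_insert_of_notMem (by simp [Fin.succEmb, Fin.succ_ne_zero]),
        Finset.card_map]
      exact hT
    -- moment identities
    have E2 : expec (fun x => f x ^ 2)
        = expec (fun y => h y ^ 2) + expec (fun y => g y ^ 2) := by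
      rw [expec_succ]
      have e1 : expec (fun y => f (Fin.cons true y) ^ 2) + expec (fun y => f (Fin.cons false y) ^ 2)
          = expec (fun y => 2 * (h y ^ 2) + 2 * (g y ^ 2)) := by
        rw [← expec_add]
        exact expec_congr' fun y => by rw [hft, hff]; ring
      rw [e1, expec_add, expec_const_mul, expec_const_mul]
      ring
    have E4 : expec (fun x => f x ^ 4)
        = expec (fun y => h y ^ 4) + 6 * expec (fun y => h y ^ 2 * g y ^ 2)
          + expec (fun y => g y ^ 4) := by
      rw [expec_succ]
      have e1 : expec (fun y => f (Fin.cons true y) ^ 4) + expec (fun y => f (Fin.cons false y) ^ 4)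
          = expec (fun y => 2 * (h y ^ 4) + 12 * (h y ^ 2 * g y ^ 2) + 2 * (g y ^ 4)) := by
        rw [← expec_add]
        exact expec_congr' fun y => by rw [hft, hff]; ring
      rw [e1, expec_add, expec_add, expec_const_mul, expec_const_mul, expec_const_mul]
      ring
    have hA : 0 ≤ expec (fun y => h y ^ 2) := expec_nonneg fun y => by positivity
    have hB : 0 ≤ expec (fun y => g y ^ 2) := expec_nonneg fun y => by positivity
    have hA4 : 0 ≤ expec (fun y => h y ^ 4) := expec_nonneg fun y => by positivity
    have hB4 : 0 ≤ expec (fun y => g y ^ 4) := expec_nonneg fun y => by positivity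
    have hAB : 0 ≤ expec (fun y => h y ^ 2 * g y ^ 2) := expec_nonneg fun y => by positivity
    -- Cauchy-Schwarz
    have hCS : expec (fun y => h y ^ 2 * g y ^ 2) ^ 2
        ≤ expec (fun y => h y ^ 4) * expec (fun y => g y ^ 4) := by
      unfold expec
      rw [div_pow, div_mul_div_comm, ← pow_mul, ← pow_add, show n + n = n * 2 by ring]
      gcongr
      · calc (∑ y : Fin n → Bool, h y ^ 2 * g y ^ 2) ^ 2
            ≤ (∑ y : Fin n → Bool, (h y ^ 2) ^ 2) * ∑ y : Fin n → Bool, (g y ^ 2) ^ 2 :=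
              Finset.sum_mul_sq_le_sq_mul_sq _ _ _
          _ = (∑ y : Fin n → Bool, h y ^ 4) * ∑ y : Fin n → Bool, g y ^ 4 := by
              congr 1 <;> exact Finset.sum_congr rfl fun y _ => by ring
    have IHh := IH d h hdegh
    rcases Nat.eq_zero_or_pos d with hd0 | hdpos
    · -- d = 0 : g vanishes identically
      subst hd0
      have hg0 : ∀ y, g y = 0 := by
        intro y
        rw [fourier_inversion g y]
        apply Finset.sum_eq_zero
        intro T _
        rw [hgcoef T (Nat.succ_pos _), zero_mul]
      have eB : expec (fun y => g y ^ 2) = 0 := by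
        rw [expec_congr' (G := fun _ => (0:ℝ)) fun y => by rw [hg0]; ring, expec_zero]
      have eB4 : expec (fun y => g y ^ 4) = 0 := by
        rw [expec_congr' (G := fun _ => (0:ℝ)) fun y => by rw [hg0]; ring, expec_zero]
      have eAB : expec (fun y => h y ^ 2 * g y ^ 2) = 0 := by
        rw [expec_congr' (G := fun _ => (0:ℝ)) fun y => by rw [hg0]; ring, expec_zero]
      rw [E4, E2, eB, eB4, eAB]
      simpa using IHh
    · obtain ⟨e, rfl⟩ := Nat.exists_eq_add_of_le hdpos
      have IHg := IH e g (fun T hT => hgcoef T (by omega))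
      -- bound the cross term
      have hcross : expec (fun y => h y ^ 2 * g y ^ 2)
          ≤ 3 ^ (1 + e) * 3 ^ e * (expec (fun y => h y ^ 2) * expec (fun y => g y ^ 2)) := by
        have h1 : expec (fun y => h y ^ 2 * g y ^ 2) ^ 2
            ≤ (3 ^ (1 + e) * 3 ^ e * (expec (fun y => h y ^ 2) * expec (fun y => g y ^ 2))) ^ 2 := by
          calc expec (fun y => h y ^ 2 * g y ^ 2) ^ 2
              ≤ expec (fun y => h y ^ 4) * expec (fun y => g y ^ 4) := hCS
            _ ≤ (9 ^ (1 + e) * expec (fun y => h y ^ 2) ^ 2)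
                * (9 ^ e * expec (fun y => g y ^ 2) ^ 2) := by
                apply mul_le_mul IHh IHg hB4 (by positivity)
            _ = (3 ^ (1 + e) * 3 ^ e * (expec (fun y => h y ^ 2) * expec (fun y => g y ^ 2))) ^ 2 := by
                have : (9:ℝ) = 3 ^ 2 := by norm_num
                rw [this, ← pow_mul, ← pow_mul]
                ring
        nlinarith [hAB, mul_nonneg (mul_nonneg (by positivity : (0:ℝ) ≤ 3 ^ (1+e) * 3 ^ e) hA) hB]
      rw [E4, E2]
      have key9 : (9:ℝ) ^ (1 + e) = 9 * 9 ^ e := by rw [pow_add]; ring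
      have key3 : (3:ℝ) ^ (1 + e) * 3 ^ e = 3 * (3 ^ e * 3 ^ e) := by rw [pow_add]; ring
      have h9e : (0:ℝ) < 9 ^ e := by positivity
      have h3e : (3:ℝ) ^ e * 3 ^ e = 9 ^ e := by
        rw [← pow_add, show e + e = 2 * e by ring, pow_mul]; norm_num
      nlinarith [IHh, IHg, hcross, hA, hB, mul_nonneg hA hB, h9e]


end BonamiAux

/-- Bonami's lemma: degree-d functions satisfy E[f⁴] ≤ 9^d (E[f²])²,
equivalently ‖f‖₄ ≤ 3^{d/2} ‖f‖₂. -/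
theorem bonami {n d : ℕ} (f : (Fin n → Bool) → ℝ)
    (hdeg : ∀ S : Finset (Fin n), d < S.card → fcoef f S = 0) :
    expec (fun x => f x ^ 4) ≤ 9 ^ d * (expec (fun x => f x ^ 2)) ^ 2 ∧
    pnorm 4 f ≤ (3 : ℝ) ^ ((d : ℝ) / 2) * pnorm 2 f := by

  have key := bonami_main n d f hdeg
  refine ⟨key, ?_⟩
  have hM2 : 0 ≤ expec (fun x => f x ^ 2) := expec_nonneg fun x => by positivity
  have hM4 : 0 ≤ expec (fun x => f x ^ 4) := expec_nonneg fun x => by positivity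
  have e4 : expec (fun x => |f x| ^ (4:ℝ)) = expec (fun x => f x ^ 4) := by
    apply expec_congr'
    intro x
    rw [show (4:ℝ) = ((4:ℕ):ℝ) by norm_num, Real.rpow_natCast, pow_abs,
      abs_of_nonneg (by positivity)]
  have e2 : expec (fun x => |f x| ^ (2:ℝ)) = expec (fun x => f x ^ 2) := by
    apply expec_congr'
    intro x
    rw [show (2:ℝ) = ((2:ℕ):ℝ) by norm_num, Real.rpow_natCast, pow_abs,
      abs_of_nonneg (by positivity)]
  unfold pnorm
  rw [e4, e2]
  calc (expec (fun x => f x ^ 4)) ^ ((1:ℝ)/4)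
      ≤ (9 ^ d * (expec (fun x => f x ^ 2)) ^ 2) ^ ((1:ℝ)/4) :=
        Real.rpow_le_rpow hM4 key (by norm_num)
    _ = (3:ℝ) ^ ((d:ℝ)/2) * (expec (fun x => f x ^ 2)) ^ ((1:ℝ)/2) := by
        rw [Real.mul_rpow (by positivity) (by positivity)]
        congr 1
        · rw [show (9:ℝ)^d = 3 ^ (2*d) by rw [pow_mul]; norm_num,
            ← Real.rpow_natCast 3 (2*d), ← Real.rpow_mul (by norm_num)]
          congr 1
          push_cast
          ring
        · rw [← Real.rpow_natCast (expec fun x => f x ^ 2) 2, ← Real.rpow_mul hM2]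
          norm_num
end

section
/- Truncation estimate via hypercontractivity: for every f : {-1,1}ⁿ → ℝ and d ≥ 0, ‖f^{≤d}‖₂² ≤ 3^{d/2} ‖f‖₂ ‖f‖_{4/3}, where f^{≤d} = ∑_{|S|≤d} f̂(S) χ_S. -/
open Finset Function

/-!
Write `g = f^{≤d}`. Orthogonality of the characters gives `‖g‖₂² = E[g f]`, and Hölder with
exponents `(4, 4/3)` bounds this by `‖g‖₄ ‖f‖_{4/3}`; Bessel's inequality `‖g‖₂ ≤ ‖f‖₂` finishes
once `‖g‖₄ ≤ 3^{d/2} ‖g‖₂`. This Bonami bound follows from the degree-free inequality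
`E[P⁴] ≤ (∑_S 3^{|S|} P̂(S)²)²`, proved by peeling off one coordinate at a time: writing
`P = χ_{i} D + E` with `D`, `E` independent of `x_i`, the odd powers of `χ_{i}` average out of
`E[P⁴]`, and the cross term `6 E[D²E²]` is handled by Cauchy–Schwarz.
-/

namespace BooleanCube

variable {n : ℕ}

theorem expec_nonneg {F : (Fin n → Bool) → ℝ} (hF : ∀ x, 0 ≤ F x) : 0 ≤ expec F :=
  div_nonneg (sum_nonneg fun x _ => hF x) (by positivity)

theorem expec_const (c : ℝ) : expec (fun _ : Fin n → Bool => c) = c := by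
  simp [expec]

theorem expec_add (F G : (Fin n → Bool) → ℝ) :
    expec (fun x => F x + G x) = expec F + expec G := by
  simp only [expec, sum_add_distrib, add_div]

theorem expec_const_mul (c : ℝ) (F : (Fin n → Bool) → ℝ) :
    expec (fun x => c * F x) = c * expec F := by
  simp only [expec, ← mul_sum, mul_div_assoc]

theorem expec_sum {ι : Type*} (s : Finset ι) (F : ι → (Fin n → Bool) → ℝ) :
    expec (fun x => ∑ j ∈ s, F j x) = ∑ j ∈ s, expec (F j) := by
  simp only [expec, sum_comm (s := s), sum_div]

theorem pnorm_nonneg (p : ℝ) (g : (Fin n → Bool) → ℝ) : 0 ≤ pnorm p g :=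
  Real.rpow_nonneg (expec_nonneg fun _ => by positivity) _

theorem pnorm_pow_of_even {k : ℕ} (hk : Even k) (hk0 : k ≠ 0) (g : (Fin n → Bool) → ℝ) :
    pnorm k g ^ k = expec (fun x => g x ^ k) := by
  simp only [pnorm, Real.rpow_natCast, hk.pow_abs, one_div]
  exact Real.rpow_inv_natCast_pow (expec_nonneg fun x => hk.pow_nonneg (g x)) hk0

theorem pnorm_two_sq (g : (Fin n → Bool) → ℝ) : pnorm 2 g ^ 2 = expec (fun x => g x ^ 2) := by
  exact_mod_cast pnorm_pow_of_even (k := 2) even_two two_ne_zero g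

theorem pnorm_four_pow_four (g : (Fin n → Bool) → ℝ) :
    pnorm 4 g ^ 4 = expec (fun x => g x ^ 4) := by
  exact_mod_cast pnorm_pow_of_even (k := 4) (by decide) four_ne_zero g

theorem expec_mul_le_pnorm_mul_pnorm {p q : ℝ} (hpq : p.HolderConjugate q)
    (u v : (Fin n → Bool) → ℝ) : expec (fun x => u x * v x) ≤ pnorm p u * pnorm q v := by
  have hN : (0 : ℝ) < 2 ^ n := by positivity
  have hscale : pnorm p u * pnorm q v =
      (∑ x, |u x| ^ p) ^ (1 / p) * (∑ x, |v x| ^ q) ^ (1 / q) / 2 ^ n := by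
    rw [pnorm, pnorm, expec, expec, Real.div_rpow (sum_nonneg fun _ _ => by positivity) hN.le,
      Real.div_rpow (sum_nonneg fun _ _ => by positivity) hN.le, div_mul_div_comm,
      ← Real.rpow_add hN, one_div, one_div, hpq.inv_add_inv_eq_one, Real.rpow_one]
  rw [hscale, expec]
  gcongr
  exact Real.inner_le_Lp_mul_Lq univ u v hpq

theorem chi_singleton (i : Fin n) (x : Fin n → Bool) :
    chi {i} x = if x i then 1 else -1 :=
  prod_singleton _ _

theorem chi_singleton_sq (i : Fin n) (x : Fin n → Bool) : chi {i} x ^ 2 = 1 := by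
  cases h : x i <;> simp [chi_singleton, h]

theorem chi_insert {i : Fin n} {T : Finset (Fin n)} (hi : i ∉ T) (x : Fin n → Bool) :
    chi (insert i T) x = chi {i} x * chi T x := by
  rw [chi_singleton]
  exact prod_insert hi

theorem chi_update_of_notMem {i : Fin n} {S : Finset (Fin n)} (hi : i ∉ S)
    (x : Fin n → Bool) (b : Bool) : chi S (update x i b) = chi S x :=
  prod_congr rfl fun j hj => by rw [update_of_ne (ne_of_mem_of_not_mem hj hi)]

theorem expec_chi_singleton_mul_eq_zero {i : Fin n} {G : (Fin n → Bool) → ℝ}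
    (hG : ∀ x b, G (update x i b) = G x) : expec (fun x => chi {i} x * G x) = 0 := by
  let flip : Equiv.Perm (Fin n → Bool) :=
    Involutive.toPerm (fun x => update x i (!x i)) fun x => by simp
  have hflip : ∀ x, chi {i} x * G x = -(chi {i} (flip x) * G (flip x)) := fun x => by
    change _ = -(chi {i} (update x i (!x i)) * G (update x i (!x i)))
    cases h : x i <;> simp [chi_singleton, h, hG]
  have hsum : ∑ x, chi {i} x * G x = -∑ x, chi {i} x * G x := by
    rw [← sum_neg_distrib]
    exact Fintype.sum_equiv flip _ _ hflip
  rw [expec, show ∑ x, chi {i} x * G x = 0 by linarith, zero_div]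

theorem chi_mul_self (S : Finset (Fin n)) (x : Fin n → Bool) : chi S x * chi S x = 1 := by
  rw [chi, ← prod_mul_distrib]
  exact prod_eq_one fun i _ => by cases x i <;> norm_num

theorem expec_chi_mul_chi_of_mem_of_notMem {S T : Finset (Fin n)} {i : Fin n} (hS : i ∈ S)
    (hT : i ∉ T) : expec (fun x => chi S x * chi T x) = 0 := by
  have hsplit : ∀ x, chi S x * chi T x = chi {i} x * (chi (S.erase i) x * chi T x) := fun x => by
    rw [← mul_assoc, ← chi_insert (notMem_erase i S), insert_erase hS]
  simp_rw [hsplit]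
  exact expec_chi_singleton_mul_eq_zero fun x b => by
    rw [chi_update_of_notMem (notMem_erase i S), chi_update_of_notMem hT]

theorem expec_chi_mul_chi (S T : Finset (Fin n)) :
    expec (fun x => chi S x * chi T x) = if S = T then 1 else 0 := by
  split_ifs with hST
  · simp_rw [hST, chi_mul_self, expec_const]
  · obtain ⟨i, hi⟩ := not_forall.mp (mt Finset.ext hST)
    by_cases hiS : i ∈ S
    · exact expec_chi_mul_chi_of_mem_of_notMem hiS (hi <| iff_of_true hiS ·)
    · simp_rw [mul_comm (chi S _)]
      exact expec_chi_mul_chi_of_mem_of_notMem (not_not.mp (hi <| iff_of_false hiS ·)) hiS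

def fourierSum (γ : Finset (Fin n) → ℝ) (x : Fin n → Bool) : ℝ :=
  ∑ S, γ S * chi S x

theorem expec_fourierSum_mul (γ : Finset (Fin n) → ℝ) (f : (Fin n → Bool) → ℝ) :
    expec (fun x => fourierSum γ x * f x) = ∑ S, γ S * fcoef f S := by
  simp_rw [fourierSum, sum_mul, mul_assoc, expec_sum, expec_const_mul, fcoef, mul_comm (chi _ _)]

theorem fcoef_fourierSum (γ : Finset (Fin n) → ℝ) (S : Finset (Fin n)) :
    fcoef (fourierSum γ) S = γ S := by
  simp_rw [fcoef, expec_fourierSum_mul, fcoef, expec_chi_mul_chi, mul_ite, mul_one, mul_zero,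
    sum_ite_eq, mem_univ, if_true]

theorem expec_fourierSum_sq (γ : Finset (Fin n) → ℝ) :
    expec (fun x => fourierSum γ x ^ 2) = ∑ S, γ S ^ 2 := by
  simp_rw [sq, expec_fourierSum_mul, fcoef_fourierSum]

theorem sum_eq_sum_insert_add_sum {M : Type*} [AddCommMonoid M] (i : Fin n)
    (F : Finset (Fin n) → M) :
    ∑ S, F S = ∑ T, (if i ∈ T then 0 else F (insert i T)) + ∑ T, (if i ∈ T then 0 else F T) := by
  have hpowerset : ∀ G : Finset (Fin n) → M,
      ∑ T ∈ (univ.erase i).powerset, G T = ∑ T, if i ∈ T then 0 else G T := fun G => by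
    simp_rw [← ite_not (i ∈ _), ← sum_filter]
    congr 1
    ext T
    simp [subset_erase]
  calc ∑ S, F S = ∑ S ∈ (insert i (univ.erase i)).powerset, F S := by
        rw [insert_erase (mem_univ i), powerset_univ]
    _ = _ := by
        rw [sum_powerset_insert (notMem_erase i univ), add_comm, hpowerset, hpowerset]

/-- The coefficients of `D_i` and `E_i` in the decomposition `f = χ_{i} · D_i f + E_i f`. -/
def coefDeriv (i : Fin n) (γ : Finset (Fin n) → ℝ) (T : Finset (Fin n)) : ℝ :=
  if i ∈ T then 0 else γ (insert i T)

def coefExpect (i : Fin n) (γ : Finset (Fin n) → ℝ) (T : Finset (Fin n)) : ℝ :=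
  if i ∈ T then 0 else γ T

theorem fourierSum_eq_chi_mul_add (i : Fin n) (γ : Finset (Fin n) → ℝ) (x : Fin n → Bool) :
    fourierSum γ x =
      chi {i} x * fourierSum (coefDeriv i γ) x + fourierSum (coefExpect i γ) x := by
  rw [fourierSum, sum_eq_sum_insert_add_sum i, fourierSum, fourierSum, mul_sum]
  congr 1 <;> refine sum_congr rfl fun T _ => ?_ <;>
    by_cases hiT : i ∈ T <;> simp [coefDeriv, coefExpect, hiT, chi_insert]
  ring

theorem sum_three_pow_mul_sq_eq (i : Fin n) (γ : Finset (Fin n) → ℝ) :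
    ∑ S, 3 ^ S.card * γ S ^ 2 =
      3 * ∑ T, 3 ^ T.card * coefDeriv i γ T ^ 2 + ∑ T, 3 ^ T.card * coefExpect i γ T ^ 2 := by
  rw [sum_eq_sum_insert_add_sum i, mul_sum]
  congr 1 <;> refine sum_congr rfl fun T _ => ?_ <;>
    by_cases hiT : i ∈ T <;> simp [coefDeriv, coefExpect, hiT, card_insert_of_notMem]
  ring

theorem fourierSum_update {i : Fin n} {γ : Finset (Fin n) → ℝ} (hγ : ∀ T, i ∈ T → γ T = 0)
    (x : Fin n → Bool) (b : Bool) : fourierSum γ (update x i b) = fourierSum γ x :=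
  sum_congr rfl fun T _ => by
    by_cases hiT : i ∈ T
    · simp [hγ T hiT]
    · rw [chi_update_of_notMem hiT]

theorem expec_chi_singleton_mul_add_pow_four {i : Fin n} {u v : (Fin n → Bool) → ℝ}
    (hu : ∀ x b, u (update x i b) = u x) (hv : ∀ x b, v (update x i b) = v x) :
    expec (fun x => (chi {i} x * u x + v x) ^ 4) =
      expec (fun x => u x ^ 4) + 6 * expec (fun x => u x ^ 2 * v x ^ 2) +
        expec (fun x => v x ^ 4) := by
  have hexpand : ∀ x, (chi {i} x * u x + v x) ^ 4 =
      u x ^ 4 + 6 * (u x ^ 2 * v x ^ 2) + v x ^ 4 +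
        chi {i} x * (4 * u x ^ 3 * v x + 4 * u x * v x ^ 3) := fun x => by
    linear_combination (u x ^ 4 * (chi {i} x ^ 2 + 1) + 4 * chi {i} x * u x ^ 3 * v x +
      6 * u x ^ 2 * v x ^ 2) * chi_singleton_sq i x
  simp_rw [hexpand]
  rw [expec_add, expec_chi_singleton_mul_eq_zero fun x b => by rw [hu, hv], add_zero,
    expec_add, expec_add, expec_const_mul]

theorem pnorm_two_le_of_expec_sq_le {g : (Fin n → Bool) → ℝ} {a : ℝ} (ha : 0 ≤ a)
    (h : expec (fun x => g x ^ 2) ≤ a ^ 2) : pnorm 2 g ≤ a :=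
  (pow_le_pow_iff_left₀ (pnorm_nonneg 2 g) ha two_ne_zero).mp (by rwa [pnorm_two_sq])

theorem expec_fourierSum_pow_four_le_of_support_subset (J : Finset (Fin n))
    (γ : Finset (Fin n) → ℝ) (hγ : ∀ S, γ S ≠ 0 → S ⊆ J) :
    expec (fun x => fourierSum γ x ^ 4) ≤ (∑ S, 3 ^ S.card * γ S ^ 2) ^ 2 := by
  induction J using Finset.induction_on generalizing γ with
  | empty =>
    have hγ₀ : ∀ S, S ≠ ∅ → γ S = 0 := fun S hS => by
      by_contra h
      exact hS (subset_empty.mp (hγ S h))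
    have hconst : ∀ x, fourierSum γ x = γ ∅ := fun x => by
      rw [fourierSum, sum_eq_single ∅ (fun S _ hS => by simp [hγ₀ S hS]) (by simp)]
      simp [chi]
    rw [sum_eq_single ∅ (fun S _ hS => by simp [hγ₀ S hS]) (by simp)]
    simp_rw [hconst, expec_const]
    norm_num [← pow_mul]
  | insert i J _ ih =>
    set u := fourierSum (coefDeriv i γ)
    set v := fourierSum (coefExpect i γ)
    set a := ∑ T, 3 ^ T.card * coefDeriv i γ T ^ 2
    set b := ∑ T, 3 ^ T.card * coefExpect i γ T ^ 2
    have ha : 0 ≤ a := sum_nonneg fun T _ => by positivity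
    have hb : 0 ≤ b := sum_nonneg fun T _ => by positivity
    have hu : expec (fun x => u x ^ 4) ≤ a ^ 2 := ih _ fun T hT => by
      by_cases hiT : i ∈ T
      · simp [coefDeriv, hiT] at hT
      · simp only [coefDeriv, hiT, if_false] at hT
        exact (insert_subset_insert_iff hiT).mp (hγ _ hT)
    have hv : expec (fun x => v x ^ 4) ≤ b ^ 2 := ih _ fun T hT => by
      by_cases hiT : i ∈ T
      · simp [coefExpect, hiT] at hT
      · simp only [coefExpect, hiT, if_false] at hT
        exact (subset_insert_iff_of_notMem hiT).mp (hγ _ hT)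
    have huv : expec (fun x => u x ^ 2 * v x ^ 2) ≤ a * b := by
      calc expec (fun x => u x ^ 2 * v x ^ 2)
          ≤ pnorm 2 (fun x => u x ^ 2) * pnorm 2 (fun x => v x ^ 2) :=
            expec_mul_le_pnorm_mul_pnorm .two_two _ _
        _ ≤ a * b := mul_le_mul
            (pnorm_two_le_of_expec_sq_le (g := fun x => u x ^ 2) ha (by simpa only [← pow_mul]))
            (pnorm_two_le_of_expec_sq_le (g := fun x => v x ^ 2) hb (by simpa only [← pow_mul]))
            (pnorm_nonneg _ _) ha
    simp_rw [fourierSum_eq_chi_mul_add i γ]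
    rw [expec_chi_singleton_mul_add_pow_four
      (fourierSum_update (γ := coefDeriv i γ) fun T hT => if_pos hT)
      (fourierSum_update (γ := coefExpect i γ) fun T hT => if_pos hT), sum_three_pow_mul_sq_eq i]
    nlinarith [sq_nonneg a]

theorem expec_fourierSum_pow_four_le (γ : Finset (Fin n) → ℝ) :
    expec (fun x => fourierSum γ x ^ 4) ≤ (∑ S, 3 ^ S.card * γ S ^ 2) ^ 2 :=
  expec_fourierSum_pow_four_le_of_support_subset univ γ fun S _ => subset_univ S

theorem sum_three_pow_mul_sq_le {d : ℕ} {γ : Finset (Fin n) → ℝ}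
    (hγ : ∀ S, d < S.card → γ S = 0) :
    ∑ S, 3 ^ S.card * γ S ^ 2 ≤ 3 ^ d * ∑ S, γ S ^ 2 := by
  rw [mul_sum]
  refine sum_le_sum fun S _ => ?_
  rcases le_or_gt S.card d with hS | hS
  · gcongr
    norm_num
  · simp [hγ S hS]

theorem pnorm_four_fourierSum_le {d : ℕ} {γ : Finset (Fin n) → ℝ}
    (hγ : ∀ S, d < S.card → γ S = 0) :
    pnorm 4 (fourierSum γ) ≤ 3 ^ ((d : ℝ) / 2) * pnorm 2 (fourierSum γ) := by
  have hpow : ((3 : ℝ) ^ ((d : ℝ) / 2)) ^ 4 = ((3 : ℝ) ^ d) ^ 2 := by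
    rw [← Real.rpow_natCast, ← Real.rpow_mul (by norm_num), ← pow_mul, ← Real.rpow_natCast]
    norm_num
    ring_nf
  rw [← pow_le_pow_iff_left₀ (pnorm_nonneg _ _)
    (mul_nonneg (by positivity) (pnorm_nonneg _ _)) four_ne_zero,
    pnorm_four_pow_four, mul_pow, hpow, show 4 = 2 * 2 from rfl, pow_mul, pnorm_two_sq,
    expec_fourierSum_sq, ← mul_pow]
  exact (expec_fourierSum_pow_four_le γ).trans
    (pow_le_pow_left₀ (sum_nonneg fun S _ => by positivity) (sum_three_pow_mul_sq_le hγ) 2)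

end BooleanCube

open BooleanCube

/-- Truncation estimate: ‖f^{≤d}‖₂² ≤ 3^{d/2} ‖f‖₂ ‖f‖_{4/3}. -/
theorem truncation_estimate {n : ℕ} (f : (Fin n → Bool) → ℝ) (d : ℕ) :
    pnorm 2 (fun x => ∑ S ∈ Finset.univ.filter (fun S : Finset (Fin n) => S.card ≤ d),
        fcoef f S * chi S x) ^ 2 ≤
      (3 : ℝ) ^ ((d : ℝ) / 2) * pnorm 2 f * pnorm (4 / 3) f := by
  set γ : Finset (Fin n) → ℝ := fun S => if S.card ≤ d then fcoef f S else 0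
  have hγ : (fun x => ∑ S ∈ univ.filter (fun S : Finset (Fin n) => S.card ≤ d),
      fcoef f S * chi S x) = fourierSum γ := funext fun x => by
    simp_rw [fourierSum, γ, ite_mul, zero_mul, sum_filter]
  have hproj : pnorm 2 (fourierSum γ) ^ 2 = expec (fun x => fourierSum γ x * f x) := by
    rw [pnorm_two_sq, expec_fourierSum_sq, expec_fourierSum_mul]
    refine sum_congr rfl fun S _ => ?_
    by_cases hS : S.card ≤ d <;> simp [γ, hS, sq]
  have hbessel : pnorm 2 (fourierSum γ) ≤ pnorm 2 f := by
    have := hproj.trans_le (expec_mul_le_pnorm_mul_pnorm .two_two _ f)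
    nlinarith [pnorm_nonneg 2 (fourierSum γ), pnorm_nonneg 2 f]
  rw [hγ]
  calc pnorm 2 (fourierSum γ) ^ 2 = expec (fun x => fourierSum γ x * f x) := hproj
    _ ≤ pnorm 4 (fourierSum γ) * pnorm (4 / 3) f :=
        expec_mul_le_pnorm_mul_pnorm (Real.holderConjugate_iff.mpr ⟨by norm_num, by norm_num⟩) _ _
    _ ≤ 3 ^ ((d : ℝ) / 2) * pnorm 2 (fourierSum γ) * pnorm (4 / 3) f := by
        gcongr
        · exact pnorm_nonneg _ f
        · exact pnorm_four_fourierSum_le fun S hS => if_neg hS.not_ge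
    _ ≤ 3 ^ ((d : ℝ) / 2) * pnorm 2 f * pnorm (4 / 3) f := by
        gcongr
        exact pnorm_nonneg _ f
end

section
/- Kahn–Kalai–Linial theorem: there is an absolute constant c > 0 such that for every Boolean function f : {-1,1}ⁿ → {-1,1} (n ≥ 2) there exists i ∈ [n] with I_i(f) ≥ c (log n / n) Var[f]. -/
open Finset Function

namespace KKLaux
open Finset Function
variable {n : ℕ}

abbrev Cube (n : ℕ) := Fin n → Bool
noncomputable def E {n : ℕ} (f : Cube n → ℝ) : ℝ := (∑ x : Cube n, f x) / 2 ^ n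
def sg (b : Bool) : ℝ := if b then 1 else -1
def ch {n : ℕ} (s x : Cube n) : ℝ := ∏ i, if s i then sg (x i) else 1
noncomputable def cf {n : ℕ} (f : Cube n → ℝ) (s : Cube n) : ℝ := E fun x => f x * ch s x
def wt {n : ℕ} (s : Cube n) : ℕ := ∑ i, if s i then 1 else 0
noncomputable def dd {n : ℕ} (f : Cube n → ℝ) (i : Fin n) : Cube n → ℝ :=
  fun x => (f (Function.update x i true) - f (Function.update x i false)) / 2

lemma E_nonneg {f : Cube n → ℝ} (h : ∀ x, 0 ≤ f x) : 0 ≤ E f := by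
  unfold E
  apply div_nonneg (Finset.sum_nonneg fun x _ => h x) (by positivity)

lemma E_mono {f g : Cube n → ℝ} (h : ∀ x, f x ≤ g x) : E f ≤ E g := by
  unfold E
  exact div_le_div_of_nonneg_right (Finset.sum_le_sum fun x _ => h x) (by positivity)
    |>.trans_eq rfl

lemma E_sum {ι : Type*} (t : Finset ι) (F : ι → Cube n → ℝ) :
    E (fun x => ∑ i ∈ t, F i x) = ∑ i ∈ t, E (F i) := by
  unfold E; rw [Finset.sum_comm, Finset.sum_div]

lemma E_add (f g : Cube n → ℝ) : E (fun x => f x + g x) = E f + E g := by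
  unfold E; rw [Finset.sum_add_distrib, add_div]

lemma E_mul_const (f : Cube n → ℝ) (a : ℝ) : E (fun x => f x * a) = E f * a := by
  unfold E; rw [← Finset.sum_mul, ← div_mul_eq_mul_div]

lemma E_const_mul (f : Cube n → ℝ) (a : ℝ) : E (fun x => a * f x) = a * E f := by
  unfold E; rw [← Finset.mul_sum, mul_div_assoc]

lemma sum_pi_prod (g : Fin n → Bool → ℝ) :
    ∑ x : Cube n, ∏ i, g i (x i) = ∏ i, ∑ b, g i b := by
  rw [← Finset.sum_prod_piFinset univ g, Fintype.piFinset_univ]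

lemma ch_mul_ch (s t x : Cube n) :
    ch s x * ch t x = ∏ i, ((if s i then sg (x i) else 1) * (if t i then sg (x i) else 1)) := by
  rw [ch, ch, ← Finset.prod_mul_distrib]

lemma orth (s t : Cube n) : E (fun x => ch s x * ch t x) = if s = t then 1 else 0 := by
  unfold E
  simp only [ch_mul_ch]
  rw [sum_pi_prod (fun i b => (if s i then sg b else 1) * (if t i then sg b else 1))]
  have key : ∀ i : Fin n, (∑ b, (if s i then sg b else 1) * (if t i then sg b else 1))
      = if s i = t i then 2 else 0 := by
    intro i
    cases hs : s i <;> cases ht : t i <;> norm_num [sg]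
  simp only [key]
  by_cases h : s = t
  · subst h
    simp only [if_pos rfl, Finset.prod_const, if_true, Finset.card_univ, Fintype.card_fin,
      eq_self_iff_true]
    rw [div_eq_one_iff_eq (by positivity)]
  · obtain ⟨i, hi⟩ := Function.ne_iff.mp h
    rw [if_neg h, Finset.prod_eq_zero (Finset.mem_univ i) (by simp [hi]), zero_div]

lemma sum_ch (y x : Cube n) :
    ∑ s : Cube n, ch s y * ch s x = if y = x then (2:ℝ) ^ n else 0 := by
  have : ∀ s : Cube n, ch s y * ch s x
      = ∏ i, (if s i then sg (y i) * sg (x i) else 1) := by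
    intro s
    rw [ch, ch, ← Finset.prod_mul_distrib]
    exact Finset.prod_congr rfl fun i _ => by by_cases h : s i <;> simp [h]
  simp only [this]
  rw [sum_pi_prod (fun (i : Fin n) (t : Bool) => if t = true then sg (y i) * sg (x i) else 1)]
  have key : ∀ i : Fin n, (∑ t : Bool, if t = true then sg (y i) * sg (x i) else 1)
      = if y i = x i then 2 else 0 := by
    intro i; cases hy : y i <;> cases hx : x i <;> norm_num [sg]
  simp only [key]
  by_cases h : y = x
  · subst h; simp
  · obtain ⟨i, hi⟩ := Function.ne_iff.mp h
    rw [if_neg h, Finset.prod_eq_zero (Finset.mem_univ i) (by simp [hi])]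

lemma expansion (f : Cube n → ℝ) (x : Cube n) : f x = ∑ s : Cube n, cf f s * ch s x := by
  have : ∀ s : Cube n, cf f s * ch s x = E (fun y => f y * ch s y * ch s x) := by
    intro s; rw [cf, E_mul_const]
  rw [Finset.sum_congr rfl fun s _ => this s, ← E_sum]
  have : (fun y => ∑ s : Cube n, f y * ch s y * ch s x)
      = fun y => f y * (if y = x then (2:ℝ) ^ n else 0) := by
    funext y
    rw [← sum_ch y x, Finset.mul_sum]
    exact Finset.sum_congr rfl fun s _ => (mul_assoc _ _ _)
  rw [this]
  unfold E
  simp only [mul_ite, mul_zero, Finset.sum_ite_eq', Finset.mem_univ, if_true]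
  field_simp

lemma parseval' (a b : Cube n → ℝ) :
    E (fun x => (∑ s : Cube n, a s * ch s x) * (∑ s : Cube n, b s * ch s x))
      = ∑ s : Cube n, a s * b s := by
  have : (fun x => (∑ s : Cube n, a s * ch s x) * (∑ s : Cube n, b s * ch s x))
      = fun x => ∑ s : Cube n, ∑ t : Cube n, (a s * b t) * (ch s x * ch t x) := by
    funext x; rw [Finset.sum_mul_sum]
    exact Finset.sum_congr rfl fun s _ => Finset.sum_congr rfl fun t _ => by ring
  rw [this]
  rw [E_sum]
  rw [Finset.sum_congr rfl fun s _ => E_sum univ _]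
  rw [Finset.sum_congr rfl fun s _ => Finset.sum_congr rfl fun t _ => by
    rw [show (fun x => a s * b t * (ch s x * ch t x)) = fun x => (a s * b t) * (ch s x * ch t x) from rfl,
      show E (fun x => (a s * b t) * (ch s x * ch t x)) = (a s * b t) * E (fun x => ch s x * ch t x) from by
        unfold E; rw [← Finset.mul_sum, mul_div_assoc], orth s t]]
  simp only [mul_ite, mul_one, mul_zero, Finset.sum_ite_eq, Finset.mem_univ, if_true]

lemma parseval (f g : Cube n → ℝ) :
    E (fun x => f x * g x) = ∑ s : Cube n, cf f s * cf g s := by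
  have : (fun x => f x * g x) = fun x =>
      (∑ s : Cube n, cf f s * ch s x) * (∑ s : Cube n, cf g s * ch s x) := by
    funext x; rw [← expansion, ← expansion]
  rw [this, parseval']

lemma cf_of_sum (a : Cube n → ℝ) (t : Cube n) :
    cf (fun x => ∑ s : Cube n, a s * ch s x) t = a t := by
  unfold cf
  have : (fun x => (∑ s : Cube n, a s * ch s x) * ch t x)
      = fun x => ∑ s : Cube n, a s * (ch s x * ch t x) := by
    funext x; rw [Finset.sum_mul]
    exact Finset.sum_congr rfl fun s _ => by ring
  rw [this, E_sum]
  rw [Finset.sum_congr rfl fun s _ => by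
    rw [show E (fun x => a s * (ch s x * ch t x)) = a s * E (fun x => ch s x * ch t x) from by
      unfold E; rw [← Finset.mul_sum, mul_div_assoc], orth s t]]
  simp only [mul_ite, mul_one, mul_zero, Finset.sum_ite_eq', Finset.mem_univ, if_true]

lemma CS_E (F G : Cube n → ℝ) :
    E (fun x => F x * G x) ≤ Real.sqrt (E (fun x => F x ^ 2)) * Real.sqrt (E (fun x => G x ^ 2)) := by
  unfold E
  have h := Real.sum_mul_le_sqrt_mul_sqrt (univ : Finset (Cube n)) F G
  have h2 : (0:ℝ) < 2 ^ n := by positivity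
  simp only []
  rw [Real.sqrt_div (by positivity) ((2:ℝ)^n), Real.sqrt_div (by positivity) ((2:ℝ)^n)]
  rw [div_mul_div_comm, Real.mul_self_sqrt (le_of_lt h2)]
  exact div_le_div_of_nonneg_right h h2.le |>.trans_eq rfl

lemma sum_cube_succ (g : Cube (n+1) → ℝ) :
    ∑ s : Cube (n+1), g s
      = ∑ t : Cube n, g (Fin.cons false t) + ∑ t : Cube n, g (Fin.cons true t) := by
  rw [← Equiv.sum_comp (Fin.consEquiv (fun _ : Fin (n+1) => Bool)) g]
  rw [Fintype.sum_prod_type, Fintype.sum_bool]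
  rw [add_comm]
  rfl

lemma E_succ (F : Cube (n+1) → ℝ) :
    E F = (E (fun y => F (Fin.cons false y)) + E (fun y => F (Fin.cons true y))) / 2 := by
  unfold E
  rw [sum_cube_succ F]
  rw [pow_succ]
  field_simp

lemma wt_cons (b : Bool) (t : Cube n) : wt (Fin.cons b t) = (if b then 1 else 0) + wt t := by
  unfold wt
  rw [Fin.sum_univ_succ]
  simp

lemma ch_cons (c b : Bool) (t y : Cube n) :
    ch (Fin.cons c t) (Fin.cons b y) = (if c then sg b else 1) * ch t y := by
  unfold ch
  rw [Fin.prod_univ_succ]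
  simp

lemma bonami (ρ : ℝ) (hρ : 0 ≤ ρ) (hρ2 : ρ ^ 2 ≤ 1/3) :
    ∀ (n : ℕ) (a : Cube n → ℝ),
      E (fun x => (∑ s : Cube n, ρ ^ wt s * a s * ch s x) ^ 4)
        ≤ (∑ s : Cube n, a s ^ 2) ^ 2 := by
  intro n
  induction n with
  | zero =>
    intro a
    have hu : (Finset.univ : Finset (Cube 0)) = {default} := by
      apply Finset.eq_singleton_iff_unique_mem.mpr
      exact ⟨Finset.mem_univ _, fun x _ => Subsingleton.elim x default⟩
    simp only [E, hu, Finset.sum_singleton, pow_zero, Nat.pow_zero]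
    have hwt : wt (default : Cube 0) = 0 := by simp [wt]
    have hch : ∀ x : Cube 0, ch (default : Cube 0) x = 1 := by
      intro x; simp [ch]
    rw [hwt, hch]
    norm_num
    exact le_of_eq (by ring)
  | succ n ih =>
    intro a
    set A : Cube n → ℝ := fun y => ∑ t : Cube n, ρ ^ wt t * a (Fin.cons false t) * ch t y with hA
    set B : Cube n → ℝ := fun y => ∑ t : Cube n, ρ ^ wt t * a (Fin.cons true t) * ch t y with hB
    have split : ∀ (b : Bool) (y : Cube n),
        (∑ s : Cube (n+1), ρ ^ wt s * a s * ch s (Fin.cons b y))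
          = A y + sg b * (ρ * B y) := by
      intro b y
      rw [sum_cube_succ (fun s => ρ ^ wt s * a s * ch s (Fin.cons b y))]
      congr 1
      · rw [hA]
        apply Finset.sum_congr rfl
        intro t _
        rw [wt_cons, ch_cons]
        simp
      · rw [hB, Finset.mul_sum, Finset.mul_sum]
        apply Finset.sum_congr rfl
        intro t _
        rw [wt_cons, ch_cons]
        simp only [if_true, if_pos]
        ring
    rw [E_succ]
    have hFalse : (fun y => (∑ s : Cube (n+1), ρ ^ wt s * a s * ch s (Fin.cons false y)) ^ 4)
        = fun y => (A y - ρ * B y) ^ 4 := by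
      funext y; rw [split]; simp [sg]; ring
    have hTrue : (fun y => (∑ s : Cube (n+1), ρ ^ wt s * a s * ch s (Fin.cons true y)) ^ 4)
        = fun y => (A y + ρ * B y) ^ 4 := by
      funext y; rw [split]; simp [sg]
    rw [hFalse, hTrue]
    have combine : (E (fun y => (A y - ρ * B y) ^ 4) + E (fun y => (A y + ρ * B y) ^ 4)) / 2
        = E (fun y => A y ^ 4) + (6 * ρ ^ 2) * E (fun y => A y ^ 2 * B y ^ 2)
          + ρ ^ 4 * E (fun y => B y ^ 4) := by
      have key : (fun y => (A y - ρ * B y) ^ 4 + (A y + ρ * B y) ^ 4)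
          = fun y => 2 * (A y ^ 4 + 6 * ρ ^ 2 * (A y ^ 2 * B y ^ 2) + ρ ^ 4 * B y ^ 4) := by
        funext y; ring
      rw [← E_add, key, E_const_mul, E_add, E_add, E_const_mul, E_const_mul]
      ring
    rw [combine]
    have hAB : 0 ≤ E (fun y => A y ^ 2 * B y ^ 2) :=
      E_nonneg fun y => by positivity
    have hB4 : 0 ≤ E (fun y => B y ^ 4) := E_nonneg fun y => by positivity
    have hA4 : 0 ≤ E (fun y => A y ^ 4) := E_nonneg fun y => by positivity
    have step1 : E (fun y => A y ^ 4) + (6 * ρ ^ 2) * E (fun y => A y ^ 2 * B y ^ 2)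
          + ρ ^ 4 * E (fun y => B y ^ 4)
        ≤ E (fun y => A y ^ 4) + 2 * E (fun y => A y ^ 2 * B y ^ 2) + E (fun y => B y ^ 4) := by
      have h1 : (6 : ℝ) * ρ ^ 2 ≤ 2 := by nlinarith
      have h2 : ρ ^ 4 ≤ 1 := by nlinarith
      have := mul_le_mul_of_nonneg_right h1 hAB
      have := mul_le_mul_of_nonneg_right h2 hB4
      nlinarith
    have hCS : E (fun y => A y ^ 2 * B y ^ 2)
        ≤ Real.sqrt (E (fun y => A y ^ 4)) * Real.sqrt (E (fun y => B y ^ 4)) := by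
      have := CS_E (fun y => A y ^ 2) (fun y => B y ^ 2)
      simpa [← pow_mul] using this
    set P : ℝ := ∑ t : Cube n, a (Fin.cons false t) ^ 2 with hP
    set Q : ℝ := ∑ t : Cube n, a (Fin.cons true t) ^ 2 with hQ
    have hPn : 0 ≤ P := Finset.sum_nonneg fun t _ => sq_nonneg _
    have hQn : 0 ≤ Q := Finset.sum_nonneg fun t _ => sq_nonneg _
    have ihA : E (fun y => A y ^ 4) ≤ P ^ 2 := ih (fun t => a (Fin.cons false t))
    have ihB : E (fun y => B y ^ 4) ≤ Q ^ 2 := ih (fun t => a (Fin.cons true t))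
    have sA : Real.sqrt (E (fun y => A y ^ 4)) ≤ P := by
      rw [show P = Real.sqrt (P ^ 2) from (Real.sqrt_sq hPn).symm]
      exact Real.sqrt_le_sqrt ihA
    have sB : Real.sqrt (E (fun y => B y ^ 4)) ≤ Q := by
      rw [show Q = Real.sqrt (Q ^ 2) from (Real.sqrt_sq hQn).symm]
      exact Real.sqrt_le_sqrt ihB
    have hsum : (∑ s : Cube (n+1), a s ^ 2) = P + Q := by
      rw [hP, hQ, sum_cube_succ (fun s => a s ^ 2)]
    rw [hsum]
    have sqA := Real.sqrt_nonneg (E (fun y => A y ^ 4))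
    have sqB := Real.sqrt_nonneg (E (fun y => B y ^ 4))
    have e1 : E (fun y => A y ^ 4) ≤ Real.sqrt (E (fun y => A y ^ 4)) ^ 2 := by
      rw [Real.sq_sqrt hA4]
    have e2 : E (fun y => B y ^ 4) ≤ Real.sqrt (E (fun y => B y ^ 4)) ^ 2 := by
      rw [Real.sq_sqrt hB4]
    nlinarith [mul_le_mul sA sB sqB hPn]

lemma ch_update (s x : Cube n) (i : Fin n) (b : Bool) :
    ch s (Function.update x i b)
      = (if s i then sg b else 1) * ch (Function.update s i false) x := by
  unfold ch
  rw [Fintype.prod_eq_mul_prod_compl i (fun j => if s j then sg (Function.update x i b j) else 1),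
    Fintype.prod_eq_mul_prod_compl i
      (fun j => if (Function.update s i false) j then sg (x j) else 1)]
  rw [Function.update_self, Function.update_self]
  simp only [Bool.false_eq_true, if_false, one_mul]
  congr 1
  apply Finset.prod_congr rfl
  intro j hj
  have hji : j ≠ i := by simpa using hj
  rw [Function.update_of_ne hji, Function.update_of_ne hji]

lemma dd_ch (s : Cube n) (i : Fin n) (x : Cube n) :
    dd (ch s) i x = if s i then ch (Function.update s i false) x else 0 := by
  unfold dd
  rw [ch_update, ch_update]
  by_cases h : s i <;> simp [h, sg]

def flip (i : Fin n) (s : Cube n) : Cube n := Function.update s i (!(s i))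

lemma flip_invol (i : Fin n) : Function.Involutive (flip (n := n) i) := by
  intro s
  funext j
  by_cases hj : j = i
  · subst hj; simp [flip]
  · simp [flip, Function.update_of_ne hj]

lemma flip_sum (i : Fin n) (G : Cube n → ℝ) :
    ∑ s : Cube n, G s = ∑ s : Cube n, G (flip i s) := by
  exact (Equiv.sum_comp ((flip_invol i).toPerm _) G).symm

lemma flip_reindex (i : Fin n) (F : Cube n → ℝ) :
    ∑ t : Cube n, (if t i then (0:ℝ) else F (Function.update t i true))
      = ∑ s : Cube n, (if s i then F s else 0) := by
  rw [flip_sum i (fun s => if s i then F s else 0)]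
  apply Finset.sum_congr rfl
  intro t _
  by_cases h : t i
  · simp [flip, h]
  · have h' : t i = false := by simpa using h
    have hf : flip i t = Function.update t i true := by simp [flip, h']
    have hfi : (flip i t) i = true := by simp [flip, h']
    rw [if_neg (by simp [h']), if_pos hfi, hf]

lemma wt_update_false (s : Cube n) (i : Fin n) (h : s i = true) :
    wt s = wt (Function.update s i false) + 1 := by
  unfold wt
  rw [Fintype.sum_eq_add_sum_compl i (fun j => if s j then 1 else 0),
    Fintype.sum_eq_add_sum_compl i (fun j => if Function.update s i false j then 1 else 0)]
  rw [h, Function.update_self]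
  simp only [Bool.false_eq_true, if_false, if_true]
  have : ∑ j ∈ ({i}ᶜ : Finset (Fin n)), (if s j = true then 1 else 0)
      = ∑ j ∈ ({i}ᶜ : Finset (Fin n)), (if Function.update s i false j = true then 1 else 0) := by
    apply Finset.sum_congr rfl
    intro j hj
    have hji : j ≠ i := by simpa using hj
    rw [Function.update_of_ne hji]
  omega

lemma dd_eq_sum (f : Cube n → ℝ) (i : Fin n) :
    dd f i = fun x => ∑ t : Cube n,
      (if t i then (0:ℝ) else cf f (Function.update t i true)) * ch t x := by
  funext x
  have h1 : dd f i x = ∑ s : Cube n, cf f s * dd (ch s) i x := by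
    unfold dd
    rw [expansion f (Function.update x i true), expansion f (Function.update x i false)]
    rw [← Finset.sum_sub_distrib, Finset.sum_div]
    apply Finset.sum_congr rfl
    intro s _
    ring
  rw [h1]
  have h2 : ∀ s : Cube n, cf f s * dd (ch s) i x
      = (if s i then cf f s * ch (Function.update s i false) x else 0) := by
    intro s
    rw [dd_ch]
    by_cases h : s i <;> simp [h]
  rw [Finset.sum_congr rfl fun s _ => h2 s]
  rw [← flip_reindex i (fun s => cf f s * ch (Function.update s i false) x)]
  apply Finset.sum_congr rfl
  intro t _
  by_cases h : t i
  · simp [h]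
  · have h' : t i = false := by simpa using h
    simp only [h', Bool.false_eq_true, if_false]
    have hu : Function.update (Function.update t i true) i false = t := by
      funext j
      by_cases hj : j = i
      · subst hj; simp [h']
      · simp [Function.update_of_ne hj]
    rw [hu]

lemma cf_dd (f : Cube n → ℝ) (i : Fin n) (t : Cube n) :
    cf (dd f i) t = if t i then 0 else cf f (Function.update t i true) := by
  rw [dd_eq_sum f i]
  exact cf_of_sum _ t

lemma E_dd_sq (f : Cube n → ℝ) (i : Fin n) :
    E (fun x => dd f i x ^ 2) = ∑ s : Cube n, (if s i then cf f s ^ 2 else 0) := by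
  have : (fun x => dd f i x ^ 2) = fun x => dd f i x * dd f i x := by
    funext x; ring
  rw [this, parseval]
  rw [← flip_reindex i (fun s => cf f s ^ 2)]
  apply Finset.sum_congr rfl
  intro t _
  rw [cf_dd]
  by_cases h : t i <;> simp [h] <;> ring

lemma infl_eq (f : Cube n → ℝ) (hf : ∀ x, f x = 1 ∨ f x = -1) (i : Fin n) :
    infl f i = E (fun x => dd f i x ^ 2) := by
  have key : ∀ x : Cube n,
      (if f x ≠ f (Function.update x i (!(x i))) then (1:ℝ) else 0) = dd f i x ^ 2 := by
    intro x
    have hx : Function.update x i (x i) = x := Function.update_eq_self i x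
    unfold dd
    cases hb : x i
    · have h1 : Function.update x i false = x := by rw [← hb]; exact hx
      simp only [Bool.not_false, h1]
      rcases hf x with h2 | h2 <;> rcases hf (Function.update x i true) with h3 | h3 <;>
        rw [h2, h3] <;> norm_num
    · have h1 : Function.update x i true = x := by rw [← hb]; exact hx
      simp only [Bool.not_true, h1]
      rcases hf x with h2 | h2 <;> rcases hf (Function.update x i false) with h3 | h3 <;>
        rw [h2, h3] <;> norm_num
  have : infl f i
      = E (fun x => if f x ≠ f (Function.update x i (!(x i))) then (1:ℝ) else 0) := rfl
  rw [this]
  congr 1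
  funext x
  exact key x

lemma dd_vals (f : Cube n → ℝ) (hf : ∀ x, f x = 1 ∨ f x = -1) (i : Fin n) (x : Cube n) :
    dd f i x = 0 ∨ dd f i x = 1 ∨ dd f i x = -1 := by
  unfold dd
  rcases hf (Function.update x i true) with h1 | h1 <;>
    rcases hf (Function.update x i false) with h2 | h2 <;> rw [h1, h2] <;> norm_num

set_option maxHeartbeats 1600000 in
lemma hyp_step (f : Cube n → ℝ) (hf : ∀ x, f x = 1 ∨ f x = -1) (i : Fin n) :
    (∑ t : Cube n, ((3:ℝ)⁻¹) ^ wt t * cf (dd f i) t ^ 2)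
      ≤ infl f i * Real.sqrt (infl f i) := by
  set g := dd f i with hg
  set α : Cube n → ℝ := fun t => cf g t with hα
  set a : Cube n → ℝ := fun t => ((3:ℝ)⁻¹) ^ wt t * α t with ha
  set h : Cube n → ℝ := fun x => ∑ t : Cube n, a t * ch t x with hh
  set M : ℝ := ∑ t : Cube n, ((3:ℝ)⁻¹) ^ wt t * α t ^ 2 with hM
  have hM0 : 0 ≤ M := Finset.sum_nonneg fun t _ => by positivity
  set I : ℝ := infl f i with hI
  have hIE : I = E (fun x => g x ^ 2) := infl_eq f hf i
  have hI0 : 0 ≤ I := by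
    rw [hIE]; exact E_nonneg fun x => sq_nonneg _
  -- E (g * h) = M
  have hgh : E (fun x => g x * h x) = M := by
    rw [parseval g h, hM]
    apply Finset.sum_congr rfl
    intro t _
    rw [hh, cf_of_sum a t, ha]
    ring
  -- E h^4 ≤ M^2
  have hh4 : E (fun x => h x ^ 4) ≤ M ^ 2 := by
    set ρ : ℝ := Real.sqrt 3⁻¹ with hρdef
    have hρ0 : 0 ≤ ρ := Real.sqrt_nonneg _
    have hρ2 : ρ ^ 2 = 3⁻¹ := Real.sq_sqrt (by norm_num)
    have hform : ∀ t : Cube n, a t = ρ ^ wt t * (ρ ^ wt t * α t) := by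
      intro t
      rw [ha]
      have : ρ ^ wt t * ρ ^ wt t = ((3:ℝ)⁻¹) ^ wt t := by
        rw [← pow_add, ← two_mul, pow_mul, hρ2]
      simp only []
      rw [← mul_assoc, this]
    have hb := bonami ρ hρ0 (le_of_eq (by rw [hρ2]; norm_num)) n (fun t => ρ ^ wt t * α t)
    have hhb : (fun x => h x ^ 4)
        = fun x => (∑ t : Cube n, ρ ^ wt t * (fun t => ρ ^ wt t * α t) t * ch t x) ^ 4 := by
      funext x
      rw [hh]
      congr 2
      apply Finset.sum_congr rfl
      intro t _
      rw [hform t]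
    have hM2 : (∑ t : Cube n, ((fun t => ρ ^ wt t * α t) t) ^ 2) = M := by
      rw [hM]
      apply Finset.sum_congr rfl
      intro t _
      have : (ρ ^ wt t) ^ 2 = ((3:ℝ)⁻¹) ^ wt t := by
        rw [← pow_mul, mul_comm, pow_mul, hρ2]
      rw [mul_pow, this]
    rw [hhb]
    calc E (fun x => (∑ t : Cube n, ρ ^ wt t * (fun t => ρ ^ wt t * α t) t * ch t x) ^ 4)
        ≤ (∑ t : Cube n, ((fun t => ρ ^ wt t * α t) t) ^ 2) ^ 2 := hb
      _ = M ^ 2 := by rw [hM2]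
  -- pointwise facts
  have gvals : ∀ x, g x = 0 ∨ g x = 1 ∨ g x = -1 := by
    intro x; rw [hg]; exact dd_vals f hf i x
  have hg4 : ∀ x, g x ^ 2 * g x ^ 2 = g x ^ 2 := by
    intro x
    rcases gvals x with h0 | h0 | h0 <;> rw [h0] <;> norm_num
  have habs : ∀ x, |g x| ≤ g x ^ 2 := by
    intro x
    rcases gvals x with h0 | h0 | h0 <;> rw [h0] <;> norm_num
  -- M = E(g h) ≤ E (g^2 |h|)
  have step0 : E (fun x => g x * h x) ≤ E (fun x => g x ^ 2 * |h x|) := by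
    apply E_mono
    intro x
    calc g x * h x ≤ |g x * h x| := le_abs_self _
      _ = |g x| * |h x| := abs_mul _ _
      _ ≤ g x ^ 2 * |h x| := mul_le_mul_of_nonneg_right (habs x) (abs_nonneg _)
  -- first CS
  have step1 : E (fun x => g x ^ 2 * |h x|)
      ≤ Real.sqrt (E (fun x => g x ^ 2)) * Real.sqrt (E (fun x => g x ^ 2 * h x ^ 2)) := by
    have hCS := CS_E (fun x => g x ^ 2) (fun x => g x ^ 2 * |h x|)
    have e1 : (fun x => g x ^ 2 * (g x ^ 2 * |h x|)) = fun x => g x ^ 2 * |h x| := by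
      funext x; rw [← mul_assoc, hg4 x]
    have e2 : (fun x => (g x ^ 2) ^ 2) = fun x => g x ^ 2 := by
      funext x
      have := hg4 x; nlinarith [hg4 x]
    have e3 : (fun x => (g x ^ 2 * |h x|) ^ 2) = fun x => g x ^ 2 * h x ^ 2 := by
      funext x
      rw [mul_pow, sq_abs]
      nlinarith [hg4 x]
    rw [e1, e2, e3] at hCS
    exact hCS
  -- second CS
  have step2 : E (fun x => g x ^ 2 * h x ^ 2)
      ≤ Real.sqrt (E (fun x => g x ^ 2)) * Real.sqrt (E (fun x => h x ^ 4)) := by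
    have hCS := CS_E (fun x => g x ^ 2) (fun x => h x ^ 2)
    have e2 : (fun x => (g x ^ 2) ^ 2) = fun x => g x ^ 2 := by
      funext x; nlinarith [hg4 x]
    have e3 : (fun x => (h x ^ 2) ^ 2) = fun x => h x ^ 4 := by
      funext x; ring_nf
    rw [e2, e3] at hCS
    exact hCS
  have hEh4 : Real.sqrt (E (fun x => h x ^ 4)) ≤ M := by
    calc Real.sqrt (E (fun x => h x ^ 4)) ≤ Real.sqrt (M ^ 2) := Real.sqrt_le_sqrt hh4
      _ = M := Real.sqrt_sq hM0
  -- combine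
  have hIroot : Real.sqrt (E (fun x => g x ^ 2)) = Real.sqrt I := by rw [hIE]
  have chain : M ≤ Real.sqrt I * Real.sqrt (Real.sqrt I * M) := by
    calc M = E (fun x => g x * h x) := hgh.symm
      _ ≤ E (fun x => g x ^ 2 * |h x|) := step0
      _ ≤ Real.sqrt (E (fun x => g x ^ 2)) * Real.sqrt (E (fun x => g x ^ 2 * h x ^ 2)) := step1
      _ ≤ Real.sqrt I * Real.sqrt (Real.sqrt I * M) := by
          rw [hIroot]
          apply mul_le_mul_of_nonneg_left _ (Real.sqrt_nonneg _)
          apply Real.sqrt_le_sqrt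
          calc E (fun x => g x ^ 2 * h x ^ 2)
              ≤ Real.sqrt (E (fun x => g x ^ 2)) * Real.sqrt (E (fun x => h x ^ 4)) := step2
            _ ≤ Real.sqrt I * M := by
                rw [hIroot]
                exact mul_le_mul_of_nonneg_left hEh4 (Real.sqrt_nonneg _)
  rcases eq_or_lt_of_le hM0 with hM0' | hM0'
  · rw [← hM0']
    positivity
  · have hsq : M ^ 2 ≤ I * (Real.sqrt I * M) := by
      have h2 := mul_le_mul chain chain (le_of_lt hM0') (by positivity)
      calc M ^ 2 = M * M := sq M
        _ ≤ (Real.sqrt I * Real.sqrt (Real.sqrt I * M)) * (Real.sqrt I * Real.sqrt (Real.sqrt I * M)) := h2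
        _ = (Real.sqrt I * Real.sqrt I) * (Real.sqrt (Real.sqrt I * M) * Real.sqrt (Real.sqrt I * M)) := by ring
        _ = I * (Real.sqrt I * M) := by
            rw [Real.mul_self_sqrt hI0, Real.mul_self_sqrt (by positivity)]
    have : M * M ≤ (I * Real.sqrt I) * M := by nlinarith
    have := le_of_mul_le_mul_right this hM0'
    linarith

lemma M_reindex (f : Cube n → ℝ) (i : Fin n) :
    ∑ t : Cube n, ((3:ℝ)⁻¹) ^ wt t * cf (dd f i) t ^ 2
      = ∑ s : Cube n, (if s i then 3 * ((3:ℝ)⁻¹) ^ wt s * cf f s ^ 2 else 0) := by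
  rw [← flip_reindex i (fun s => 3 * ((3:ℝ)⁻¹) ^ wt s * cf f s ^ 2)]
  apply Finset.sum_congr rfl
  intro t _
  rw [cf_dd]
  by_cases h : t i
  · simp [h]
  · have h' : t i = false := by simpa using h
    simp only [h', Bool.false_eq_true, if_false]
    have hw : wt (Function.update t i true) = wt t + 1 := by
      have := wt_update_false (Function.update t i true) i (Function.update_self i true t)
      have hu : Function.update (Function.update t i true) i false = t := by
        funext j
        by_cases hj : j = i
        · subst hj; simp [h']
        · simp [Function.update_of_ne hj]
      rw [hu] at this
      exact this
    rw [hw, pow_succ]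
    ring

lemma cast_wt (s : Cube n) : ((wt s : ℕ) : ℝ) = ∑ i, if s i then (1:ℝ) else 0 := by
  unfold wt
  push_cast
  apply Finset.sum_congr rfl
  intro i _
  by_cases h : s i <;> simp [h]

lemma sum_ite_wt (F : Cube n → ℝ) :
    ∑ i : Fin n, ∑ s : Cube n, (if s i then F s else 0)
      = ∑ s : Cube n, (wt s : ℝ) * F s := by
  rw [Finset.sum_comm]
  apply Finset.sum_congr rfl
  intro s _
  rw [cast_wt, Finset.sum_mul]
  apply Finset.sum_congr rfl
  intro i _
  by_cases h : s i <;> simp [h]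

lemma wt_pos (s : Cube n) (hs : s ≠ (fun _ => false)) : 1 ≤ wt s := by
  by_contra hw
  push_neg at hw
  have hw0 : wt s = 0 := by omega
  apply hs
  funext j
  by_contra hj
  have hj' : s j = true := by simpa using hj
  have : (if s j then 1 else 0) ≤ wt s := by
    unfold wt
    exact Finset.single_le_sum (f := fun i => if s i then 1 else 0)
      (fun i _ => by positivity) (Finset.mem_univ j)
  rw [hj'] at this
  simp only [if_true] at this
  omega

lemma var_eq (f : Cube n → ℝ) :
    E (fun x => f x ^ 2) - (E f) ^ 2
      = ∑ s ∈ Finset.univ.erase (fun _ => false), cf f s ^ 2 := by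
  have h1 : E (fun x => f x ^ 2) = ∑ s : Cube n, cf f s ^ 2 := by
    have : (fun x => f x ^ 2) = fun x => f x * f x := by funext x; ring
    rw [this, parseval]
    exact Finset.sum_congr rfl fun s _ => (sq (cf f s)).symm
  have h2 : cf f (fun _ => false) = E f := by
    unfold cf
    have : ∀ x : Cube n, ch (fun _ => false) x = 1 := by
      intro x; unfold ch; simp
    simp only [this, mul_one]
  have h3 : ∑ s : Cube n, cf f s ^ 2
      = cf f (fun _ => false) ^ 2 + ∑ s ∈ Finset.univ.erase (fun _ => false), cf f s ^ 2 := by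
    exact (Finset.add_sum_erase _ (fun s => cf f s ^ 2) (Finset.mem_univ _)).symm
  rw [h1, h3, h2]
  ring

lemma level_decomp (f : Cube n → ℝ) (k : ℕ) (hk : 1 ≤ k) :
    E (fun x => f x ^ 2) - (E f) ^ 2
      ≤ 3 ^ k * (∑ s : Cube n, (wt s : ℝ) * (((3:ℝ)⁻¹) ^ wt s * cf f s ^ 2))
        + (∑ s : Cube n, (wt s : ℝ) * cf f s ^ 2) / k := by
  rw [var_eq]
  have key : ∀ s ∈ Finset.univ.erase (fun _ : Fin n => false),
      cf f s ^ 2 ≤ 3 ^ k * ((wt s : ℝ) * (((3:ℝ)⁻¹) ^ wt s * cf f s ^ 2))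
        + ((wt s : ℝ) * cf f s ^ 2) / k := by
    intro s hs
    have hs' : s ≠ (fun _ => false) := Finset.ne_of_mem_erase hs
    have hw1 : 1 ≤ wt s := wt_pos s hs'
    have hw1' : (1:ℝ) ≤ (wt s : ℝ) := by exact_mod_cast hw1
    have hc0 : (0:ℝ) ≤ cf f s ^ 2 := sq_nonneg _
    by_cases hcase : wt s ≤ k
    · -- use the first term
      have h3 : (3:ℝ) ^ k * ((3:ℝ)⁻¹) ^ wt s = 3 ^ (k - wt s) := by
        have : (3:ℝ) ^ k = 3 ^ (k - wt s) * 3 ^ wt s := by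
          rw [← pow_add, Nat.sub_add_cancel hcase]
        rw [this, mul_assoc, ← mul_pow]
        norm_num
      have h31 : (1:ℝ) ≤ 3 ^ (k - wt s) := one_le_pow₀ (by norm_num)
      have hfirst : cf f s ^ 2 ≤ 3 ^ k * ((wt s : ℝ) * (((3:ℝ)⁻¹) ^ wt s * cf f s ^ 2)) := by
        have heq : 3 ^ k * ((wt s : ℝ) * (((3:ℝ)⁻¹) ^ wt s * cf f s ^ 2))
            = (wt s : ℝ) * (3 ^ (k - wt s)) * cf f s ^ 2 := by
          rw [← h3]; ring
        rw [heq]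
        have hprod : (1:ℝ) * 1 ≤ (wt s : ℝ) * 3 ^ (k - wt s) :=
          mul_le_mul hw1' h31 (by norm_num) (by linarith)
        nlinarith [mul_nonneg (by linarith : (0:ℝ) ≤ (wt s : ℝ) * 3 ^ (k - wt s) - 1) hc0]
      have hsecond : (0:ℝ) ≤ ((wt s : ℝ) * cf f s ^ 2) / k := by positivity
      linarith
    · -- wt s > k : use the second term
      push_neg at hcase
      have hk' : (0:ℝ) < (k:ℝ) := by exact_mod_cast hk
      have : cf f s ^ 2 ≤ ((wt s : ℝ) * cf f s ^ 2) / k := by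
        rw [le_div_iff₀ hk']
        have hwk : (k:ℝ) ≤ (wt s : ℝ) := by exact_mod_cast le_of_lt hcase
        nlinarith
      have hfirst : (0:ℝ) ≤ 3 ^ k * ((wt s : ℝ) * (((3:ℝ)⁻¹) ^ wt s * cf f s ^ 2)) := by
        positivity
      linarith
  calc ∑ s ∈ Finset.univ.erase (fun _ : Fin n => false), cf f s ^ 2
      ≤ ∑ s ∈ Finset.univ.erase (fun _ : Fin n => false),
          (3 ^ k * ((wt s : ℝ) * (((3:ℝ)⁻¹) ^ wt s * cf f s ^ 2))
            + ((wt s : ℝ) * cf f s ^ 2) / k) := Finset.sum_le_sum key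
    _ ≤ ∑ s : Cube n, (3 ^ k * ((wt s : ℝ) * (((3:ℝ)⁻¹) ^ wt s * cf f s ^ 2))
            + ((wt s : ℝ) * cf f s ^ 2) / k) := by
        apply Finset.sum_le_sum_of_subset_of_nonneg (Finset.erase_subset _ _)
        intro s _ _
        positivity
    _ = 3 ^ k * (∑ s : Cube n, (wt s : ℝ) * (((3:ℝ)⁻¹) ^ wt s * cf f s ^ 2))
        + (∑ s : Cube n, (wt s : ℝ) * cf f s ^ 2) / k := by
        rw [Finset.sum_add_distrib, Finset.mul_sum, Finset.sum_div]

lemma infl_nonneg (f : Cube n → ℝ) (i : Fin n) : 0 ≤ infl f i := by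
  have h : infl f i
      = E (fun x => if f x ≠ f (Function.update x i (!(x i))) then (1:ℝ) else 0) := rfl
  rw [h]
  apply E_nonneg
  intro x
  split <;> norm_num

lemma E_one : E (fun _ : Cube n => (1:ℝ)) = 1 := by
  unfold E
  rw [Finset.sum_const, Finset.card_univ]
  have hcard : Fintype.card (Cube n) = 2 ^ n := by simp
  rw [hcard, nsmul_eq_mul]
  push_cast
  field_simp

set_option maxHeartbeats 2000000 in
lemma endgame (N : ℕ) (hn : 2 ≤ N) (τ V S1 S3 : ℝ)
    (hτ0 : 0 ≤ τ) (hV0 : 0 ≤ V) (hV1 : V ≤ 1) (hS10 : 0 ≤ S1)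
    (hS3 : S3 ≤ Real.sqrt τ * S1)
    (hnτ : S1 ≤ N * τ)
    (hdec : ∀ k : ℕ, 1 ≤ k → V ≤ 3 ^ k * S3 + S1 / k) :
    (1/1000) * (Real.log N / N) * V ≤ τ := by
  have hN0 : (0:ℝ) < N := by
    have : (2:ℝ) ≤ N := by exact_mod_cast hn
    linarith
  set L := Real.log N with hLdef
  have hL : 0 < L := Real.log_pos (by exact_mod_cast hn)
  by_cases hcase : L/10 * V ≤ S1
  · -- Case A : large total influence
    have hτ1 : S1 / N ≤ τ := by
      rw [div_le_iff₀ hN0]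
      linarith [hnτ]
    have step : (1/1000) * (L/N) * V ≤ (1/10) * (L/N) * V := by
      have hfac : 0 ≤ (L/N) * V := mul_nonneg (by positivity) hV0
      nlinarith
    calc (1/1000) * (L/N) * V ≤ (1/10) * (L/N) * V := step
      _ = (L/10 * V) / N := by ring
      _ ≤ S1 / N := div_le_div_of_nonneg_right hcase hN0.le
      _ ≤ τ := hτ1
  · -- Case B
    push_neg at hcase
    have hLV : 0 < L/10 * V := lt_of_le_of_lt hS10 hcase
    have hV0' : 0 < V := by
      rcases mul_pos_iff.mp hLV with ⟨_, h⟩ | ⟨h1, _⟩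
      · exact h
      · linarith
    set k := Nat.ceil (L/5) with hkdef
    have hkL : L/5 ≤ (k:ℝ) := Nat.le_ceil _
    have hkU : (k:ℝ) ≤ L/5 + 1 := (Nat.ceil_lt_add_one (by positivity)).le
    have hkpos : (0:ℝ) < (k:ℝ) := lt_of_lt_of_le (by positivity) hkL
    have hk1 : 1 ≤ k := by
      have : 0 < k := by exact_mod_cast hkpos
      omega
    have hpow : (0:ℝ) < 3 ^ k := by positivity
    have h1 : S1 / (k:ℝ) ≤ V/2 := by
      calc S1 / (k:ℝ) ≤ (L/10 * V) / (k:ℝ) := div_le_div_of_nonneg_right hcase.le hkpos.le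
        _ ≤ (L/10 * V) / (L/5) := div_le_div_of_nonneg_left hLV.le (by positivity) hkL
        _ = V/2 := by field_simp; ring
    have hdk := hdec k hk1
    have h2 : V/2 ≤ 3 ^ k * S3 := by linarith
    have h3 : V/2 ≤ 3 ^ k * (Real.sqrt τ * S1) :=
      le_trans h2 (mul_le_mul_of_nonneg_left hS3 hpow.le)
    have h4 : V/2 ≤ (3 ^ k * Real.sqrt τ * (L/10)) * V := by
      have h4' : 3 ^ k * (Real.sqrt τ * S1) ≤ 3 ^ k * (Real.sqrt τ * (L/10 * V)) := by
        apply mul_le_mul_of_nonneg_left _ hpow.le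
        exact mul_le_mul_of_nonneg_left hcase.le (Real.sqrt_nonneg _)
      have e : 3 ^ k * (Real.sqrt τ * (L/10 * V)) = (3 ^ k * Real.sqrt τ * (L/10)) * V := by
        ring
      linarith [e ▸ h4']
    have h5 : (1:ℝ)/2 ≤ 3 ^ k * Real.sqrt τ * (L/10) := by
      have h4'' : (1/2) * V ≤ (3 ^ k * Real.sqrt τ * (L/10)) * V := by linarith
      exact le_of_mul_le_mul_right h4'' hV0'
    have h6 : 5 / (3 ^ k * L) ≤ Real.sqrt τ := by
      rw [div_le_iff₀ (by positivity)]
      have e2 : 3 ^ k * Real.sqrt τ * (L/10) = (Real.sqrt τ * (3 ^ k * L)) / 10 := by ring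
      rw [e2] at h5
      linarith
    have h7 : 25 / ((9:ℝ) ^ k * L ^ 2) ≤ τ := by
      have hs := mul_le_mul h6 h6 (by positivity) (Real.sqrt_nonneg τ)
      rw [Real.mul_self_sqrt hτ0] at hs
      have e3 : 5 / (3 ^ k * L) * (5 / (3 ^ k * L)) = 25 / ((9:ℝ) ^ k * L ^ 2) := by
        rw [div_mul_div_comm]
        congr 1
        · norm_num
        · have h9 : ((9:ℝ)) ^ k = 3 ^ k * 3 ^ k := by rw [← mul_pow]; norm_num
          rw [h9]; ring
      rw [e3] at hs
      exact hs
    have hexp27 : (2.7:ℝ) < Real.exp 1 := by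
      have := Real.exp_one_gt_d9; linarith
    have hexp3eq : Real.exp 3 = Real.exp 1 * Real.exp 1 * Real.exp 1 := by
      rw [← Real.exp_add, ← Real.exp_add]; norm_num
    have h9e : (9:ℝ) ≤ Real.exp 3 := by nlinarith
    have hexp3 : Real.exp 3 ≤ 21 := by
      have := Real.exp_one_lt_d9
      nlinarith [Real.exp_pos 1]
    have h8 : (9:ℝ) ^ k ≤ Real.exp 3 * Real.exp (3*L/5) := by
      calc (9:ℝ) ^ k ≤ (Real.exp 3) ^ k := pow_le_pow_left₀ (by norm_num) h9e k
        _ = Real.exp ((k:ℝ) * 3) := (Real.exp_nat_mul 3 k).symm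
        _ ≤ Real.exp (3 + 3*L/5) := Real.exp_le_exp.mpr (by linarith [hkU])
        _ = Real.exp 3 * Real.exp (3*L/5) := by rw [← Real.exp_add]
    have hL3 : L ^ 3 ≤ (3375/8) * Real.exp (2*L/5) := by
      have ht : 2*L/15 ≤ Real.exp (2*L/15) := by linarith [Real.add_one_le_exp (2*L/15)]
      have hL15 : L ≤ (15/2) * Real.exp (2*L/15) := by linarith
      have h3c : L ^ 3 ≤ ((15/2) * Real.exp (2*L/15)) ^ 3 := pow_le_pow_left₀ hL.le hL15 3
      have hcube : (Real.exp (2*L/15)) ^ 3 = Real.exp (2*L/5) := by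
        rw [← Real.exp_nat_mul]
        congr 1
        push_cast
        ring
      calc L ^ 3 ≤ ((15/2) * Real.exp (2*L/15)) ^ 3 := h3c
        _ = (3375/8) * (Real.exp (2*L/15)) ^ 3 := by ring
        _ = (3375/8) * Real.exp (2*L/5) := by rw [hcube]
    have hNL : (N:ℝ) = Real.exp L := (Real.exp_log hN0).symm
    have key : (Real.exp 3 * Real.exp (3*L/5)) * L ^ 3 ≤ 25000 * N := by
      have hsplit : Real.exp (3*L/5) * Real.exp (2*L/5) = Real.exp L := by
        rw [← Real.exp_add]
        congr 1
        ring
      calc (Real.exp 3 * Real.exp (3*L/5)) * L ^ 3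
          ≤ (Real.exp 3 * Real.exp (3*L/5)) * ((3375/8) * Real.exp (2*L/5)) := by
            apply mul_le_mul_of_nonneg_left hL3 (by positivity)
        _ = (3375/8) * Real.exp 3 * (Real.exp (3*L/5) * Real.exp (2*L/5)) := by ring
        _ = (3375/8) * Real.exp 3 * Real.exp L := by rw [hsplit]
        _ ≤ (3375/8) * 21 * Real.exp L := by nlinarith [Real.exp_pos L]
        _ ≤ 25000 * N := by rw [hNL]; nlinarith [Real.exp_pos L]
    have hmid : 25 / ((Real.exp 3 * Real.exp (3*L/5)) * L ^ 2) ≤ 25 / ((9:ℝ) ^ k * L ^ 2) := by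
      apply div_le_div_of_nonneg_left (by norm_num) (by positivity)
      apply mul_le_mul_of_nonneg_right h8 (by positivity)
    have hfirst : (1/1000) * (L/N) ≤ 25 / ((Real.exp 3 * Real.exp (3*L/5)) * L ^ 2) := by
      have eL : (1/1000) * (L/(N:ℝ)) = L / (1000 * N) := by ring
      rw [eL, div_le_div_iff₀ (by positivity) (by positivity)]
      calc L * ((Real.exp 3 * Real.exp (3*L/5)) * L ^ 2)
          = (Real.exp 3 * Real.exp (3*L/5)) * L ^ 3 := by ring
        _ ≤ 25000 * (N:ℝ) := key
        _ = 25 * (1000 * (N:ℝ)) := by ring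
    have hstep : (1/1000) * (L/N) * V ≤ (1/1000) * (L/N) :=
      calc (1/1000) * (L/N) * V ≤ (1/1000) * (L/N) * 1 :=
            mul_le_mul_of_nonneg_left hV1 (by positivity)
        _ = (1/1000) * (L/N) := by ring
    calc (1/1000) * (L/N) * V ≤ (1/1000) * (L/N) := hstep
      _ ≤ 25 / ((Real.exp 3 * Real.exp (3*L/5)) * L ^ 2) := hfirst
      _ ≤ 25 / ((9:ℝ) ^ k * L ^ 2) := hmid
      _ ≤ τ := h7

end KKLaux


/-- The Kahn–Kalai–Linial theorem. -/
theorem KKL : ∃ c : ℝ, 0 < c ∧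
    ∀ (n : ℕ), 2 ≤ n → ∀ f : (Fin n → Bool) → ℝ, (∀ x, f x = 1 ∨ f x = -1) →
      ∃ i : Fin n,
        infl f i ≥ c * (Real.log n / n) *
          (expec (fun x => f x ^ 2) - (expec f) ^ 2) := by
  classical
  refine ⟨1/1000, by norm_num, ?_⟩
  intro n hn f hf
  have hnpos : 0 < n := by omega
  obtain ⟨i₀, -, hmax⟩ := Finset.exists_max_image (Finset.univ : Finset (Fin n)) (infl f)
      ⟨⟨0, hnpos⟩, Finset.mem_univ _⟩
  refine ⟨i₀, ?_⟩
  set τ := infl f i₀ with hτdef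
  have hEE : expec (fun x => f x ^ 2) - (expec f) ^ 2
      = KKLaux.E (fun x => f x ^ 2) - (KKLaux.E f) ^ 2 := rfl
  rw [ge_iff_le, hEE]
  set V := KKLaux.E (fun x => f x ^ 2) - (KKLaux.E f) ^ 2 with hV
  set S1 : ℝ := ∑ s : KKLaux.Cube n, (KKLaux.wt s : ℝ) * KKLaux.cf f s ^ 2 with hS1def
  set S3 : ℝ := ∑ s : KKLaux.Cube n,
      (KKLaux.wt s : ℝ) * (((3:ℝ)⁻¹) ^ KKLaux.wt s * KKLaux.cf f s ^ 2) with hS3def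
  have hτ0 : 0 ≤ τ := KKLaux.infl_nonneg f i₀
  have hV0 : 0 ≤ V := by
    rw [hV, KKLaux.var_eq]
    exact Finset.sum_nonneg fun s _ => sq_nonneg _
  have hV1 : V ≤ 1 := by
    have hsq : (fun x : KKLaux.Cube n => f x ^ 2) = fun _ => (1:ℝ) := by
      funext x
      rcases hf x with h | h <;> rw [h] <;> norm_num
    have h2 : KKLaux.E (fun x : KKLaux.Cube n => f x ^ 2) = 1 := by
      rw [hsq, KKLaux.E_one]
    rw [hV, h2]
    nlinarith [sq_nonneg (KKLaux.E f)]
  have hS10 : 0 ≤ S1 := by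
    rw [hS1def]
    exact Finset.sum_nonneg fun s _ => by positivity
  have hS1eq : S1 = ∑ i : Fin n, infl f i := by
    rw [hS1def, ← KKLaux.sum_ite_wt (fun s => KKLaux.cf f s ^ 2)]
    apply Finset.sum_congr rfl
    intro i _
    rw [KKLaux.infl_eq f hf i, KKLaux.E_dd_sq]
  have hS3 : S3 ≤ Real.sqrt τ * S1 := by
    have step1 : S3 = ∑ i : Fin n, ∑ s : KKLaux.Cube n,
        (if s i then ((3:ℝ)⁻¹) ^ KKLaux.wt s * KKLaux.cf f s ^ 2 else 0) := by
      rw [hS3def, KKLaux.sum_ite_wt (fun s => ((3:ℝ)⁻¹) ^ KKLaux.wt s * KKLaux.cf f s ^ 2)]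
    have step2 : ∀ i : Fin n, ∑ s : KKLaux.Cube n,
        (if s i then ((3:ℝ)⁻¹) ^ KKLaux.wt s * KKLaux.cf f s ^ 2 else 0)
          ≤ infl f i * Real.sqrt τ := by
      intro i
      calc ∑ s : KKLaux.Cube n,
            (if s i then ((3:ℝ)⁻¹) ^ KKLaux.wt s * KKLaux.cf f s ^ 2 else 0)
          ≤ ∑ s : KKLaux.Cube n,
            (if s i then 3 * ((3:ℝ)⁻¹) ^ KKLaux.wt s * KKLaux.cf f s ^ 2 else 0) := by
            apply Finset.sum_le_sum
            intro s _
            by_cases h : s i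
            · simp only [if_pos h]
              have : (0:ℝ) ≤ ((3:ℝ)⁻¹) ^ KKLaux.wt s * KKLaux.cf f s ^ 2 := by positivity
              nlinarith
            · simp [h]
        _ = ∑ t : KKLaux.Cube n, ((3:ℝ)⁻¹) ^ KKLaux.wt t * KKLaux.cf (KKLaux.dd f i) t ^ 2 :=
            (KKLaux.M_reindex f i).symm
        _ ≤ infl f i * Real.sqrt (infl f i) := KKLaux.hyp_step f hf i
        _ ≤ infl f i * Real.sqrt τ := by
            apply mul_le_mul_of_nonneg_left _ (KKLaux.infl_nonneg f i)
            exact Real.sqrt_le_sqrt (hmax i (Finset.mem_univ i))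
    calc S3 ≤ ∑ i : Fin n, infl f i * Real.sqrt τ := by
          rw [step1]; exact Finset.sum_le_sum fun i _ => step2 i
      _ = (∑ i : Fin n, infl f i) * Real.sqrt τ := by rw [← Finset.sum_mul]
      _ = Real.sqrt τ * S1 := by rw [← hS1eq]; ring
  have hnτ : S1 ≤ n * τ := by
    rw [hS1eq]
    calc ∑ i : Fin n, infl f i ≤ ∑ _i : Fin n, τ :=
          Finset.sum_le_sum fun i _ => hmax i (Finset.mem_univ i)
      _ = n * τ := by
          rw [Finset.sum_const, Finset.card_univ, Fintype.card_fin, nsmul_eq_mul]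
  have hdec : ∀ k : ℕ, 1 ≤ k → V ≤ 3 ^ k * S3 + S1 / k := by
    intro k hk
    rw [hV, hS3def, hS1def]
    exact KKLaux.level_decomp f k hk
  exact KKLaux.endgame n hn τ V S1 S3 hτ0 hV0 hV1 hS10 hS3 hnτ hdec
end

section
/- Fourier entropy is at most O(log n) times influence: there is a constant c > 0 such that for every Boolean function f : {-1,1}ⁿ → {-1,1} with n ≥ 3, H(f) ≤ c (log n) I(f), where H(f) = ∑_{S⊆[n]} f̂(S)² log(1/f̂(S)²) and I(f) = ∑_{S⊆[n]} |S| f̂(S)². One may assume the level-entropy inequality ∑_k W^k(f) log(1/W^k(f)) ≤ 3 I(f), where W^k(f) = ∑_{|S|=k} f̂(S)². -/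
open Finset Function

lemma abs_chi {n : ℕ} (S : Finset (Fin n)) (x : Fin n → Bool) : |chi S x| = 1 := by
  rw [chi, Finset.abs_prod]
  rw [Finset.prod_eq_one]
  intro i _
  by_cases h : x i <;> simp [h]

lemma sum_chi {n : ℕ} (S : Finset (Fin n)) (hS : S ≠ ∅) :
    ∑ x : Fin n → Bool, chi S x = 0 := by
  obtain ⟨i, hi⟩ := Finset.nonempty_iff_ne_empty.2 hS
  have hinv : Function.Involutive (fun x : Fin n → Bool => Function.update x i (!(x i))) := by
    intro x
    funext j
    by_cases h : j = i
    · subst h; simp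
    · simp [Function.update_of_ne h]
  have hbij := hinv.bijective
  have key : ∀ x : Fin n → Bool, chi S (Function.update x i (!(x i))) = - chi S x := by
    intro x
    have h1 : chi S (Function.update x i (!(x i))) =
        (if Function.update x i (!(x i)) i then (1:ℝ) else -1) * ∏ j ∈ S.erase i,
        (if Function.update x i (!(x i)) j then (1:ℝ) else -1) := (Finset.mul_prod_erase S _ hi).symm
    have h2 : chi S x = (if x i then (1:ℝ) else -1) * ∏ j ∈ S.erase i,
        (if x j then (1:ℝ) else -1) := (Finset.mul_prod_erase S _ hi).symm
    have h3 : ∀ j ∈ S.erase i, ((if Function.update x i (!(x i)) j then (1:ℝ) else -1))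
        = (if x j then (1:ℝ) else -1) := by
      intro j hj
      rw [Function.update_of_ne (Finset.ne_of_mem_erase hj)]
    rw [h1, h2, Finset.prod_congr rfl h3, Function.update_self]
    by_cases h : x i <;> simp [h]
  have h0 : ∑ x : Fin n → Bool, chi S (Function.update x i (!(x i))) =
      ∑ x : Fin n → Bool, chi S x := hbij.sum_comp (chi S)
  have h2 : ∑ x : Fin n → Bool, chi S (Function.update x i (!(x i))) =
      - ∑ x : Fin n → Bool, chi S x := by
    rw [← Finset.sum_neg_distrib]
    exact Finset.sum_congr rfl (fun x _ => key x)
  -- h0 : ∑ x, chi S x = ∑ x, chi S (update x i !x i)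
  linarith [h0, h2]

lemma sum_chi_mul {n : ℕ} (x y : Fin n → Bool) :
    ∑ S : Finset (Fin n), chi S x * chi S y = if x = y then (2:ℝ) ^ n else 0 := by
  have h1 : ∀ S : Finset (Fin n), chi S x * chi S y =
      ∏ i ∈ S, ((if x i then (1:ℝ) else -1) * (if y i then (1:ℝ) else -1)) := by
    intro S; rw [chi, chi, ← Finset.prod_mul_distrib]
  have h2 : ∑ S : Finset (Fin n), chi S x * chi S y =
      ∏ i : Fin n, (((if x i then (1:ℝ) else -1) * (if y i then (1:ℝ) else -1)) + 1) := by
    rw [Finset.prod_add]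
    rw [← Finset.powerset_univ]
    apply Finset.sum_congr rfl
    intro S _
    rw [h1 S]
    simp
  rw [h2]
  by_cases h : x = y
  · subst h
    simp only [if_pos rfl]
    have hfac : ∀ i : Fin n, ((if x i then (1:ℝ) else -1) * (if x i then (1:ℝ) else -1)) + 1
        = 2 := by
      intro i; by_cases hx : x i <;> simp [hx] <;> norm_num
    rw [Finset.prod_congr rfl (fun i _ => hfac i), Finset.prod_const]
    simp
  · rw [if_neg h]
    obtain ⟨i, hi⟩ : ∃ i, x i ≠ y i := by
      by_contra hc
      push_neg at hc
      exact h (funext hc)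
    apply Finset.prod_eq_zero (Finset.mem_univ i)
    rcases Bool.eq_false_or_eq_true (x i) with hx | hx <;>
      rcases Bool.eq_false_or_eq_true (y i) with hy | hy <;>
      simp [hx, hy] at hi ⊢

lemma parseval {n : ℕ} (f : (Fin n → Bool) → ℝ) (hsq : ∀ x, f x ^ 2 = 1) :
    ∑ S : Finset (Fin n), fcoef f S ^ 2 = 1 := by
  have hpow : ((2:ℝ) ^ n) ≠ 0 := by positivity
  have hrw : ∀ S : Finset (Fin n), fcoef f S ^ 2 =
      ((∑ x : Fin n → Bool, f x * chi S x) * (∑ y : Fin n → Bool, f y * chi S y))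
        / ((2:ℝ) ^ n * 2 ^ n) := by
    intro S
    rw [fcoef, expec]
    field_simp
  have key : ∑ S : Finset (Fin n),
      ((∑ x : Fin n → Bool, f x * chi S x) * (∑ y : Fin n → Bool, f y * chi S y))
      = (2:ℝ) ^ n * 2 ^ n := by
    have expand : ∀ S : Finset (Fin n),
        (∑ x : Fin n → Bool, f x * chi S x) * (∑ y : Fin n → Bool, f y * chi S y)
        = ∑ x : Fin n → Bool, ∑ y : Fin n → Bool, (f x * f y) * (chi S x * chi S y) := by
      intro S
      rw [Finset.sum_mul_sum]
      exact Finset.sum_congr rfl fun x _ => Finset.sum_congr rfl fun y _ => by ring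
    calc ∑ S : Finset (Fin n),
        ((∑ x : Fin n → Bool, f x * chi S x) * (∑ y : Fin n → Bool, f y * chi S y))
        = ∑ S : Finset (Fin n), ∑ x : Fin n → Bool, ∑ y : Fin n → Bool,
            (f x * f y) * (chi S x * chi S y) := Finset.sum_congr rfl fun S _ => expand S
      _ = ∑ x : Fin n → Bool, ∑ y : Fin n → Bool, ∑ S : Finset (Fin n),
            (f x * f y) * (chi S x * chi S y) := by
          rw [Finset.sum_comm]
          exact Finset.sum_congr rfl fun x _ => Finset.sum_comm
      _ = ∑ x : Fin n → Bool, ∑ y : Fin n → Bool,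
            (if x = y then f x * f y * 2 ^ n else 0) := by
          apply Finset.sum_congr rfl; intro x _
          apply Finset.sum_congr rfl; intro y _
          rw [← Finset.mul_sum, sum_chi_mul]
          split <;> ring
      _ = ∑ x : Fin n → Bool, f x * f x * 2 ^ n := by
          apply Finset.sum_congr rfl; intro x _
          rw [Finset.sum_ite_eq (Finset.univ) x (fun y => f x * f y * 2 ^ n)]
          simp
      _ = (2:ℝ) ^ n * 2 ^ n := by
          have h4 : ∀ x : Fin n → Bool, f x * f x * (2:ℝ) ^ n = 2 ^ n := by
            intro x
            rw [show f x * f x = f x ^ 2 by ring, hsq x, one_mul]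
          rw [Finset.sum_congr rfl fun x _ => h4 x, Finset.sum_const]
          simp [Fintype.card_fun]
  calc ∑ S : Finset (Fin n), fcoef f S ^ 2
      = ∑ S : Finset (Fin n),
        ((∑ x : Fin n → Bool, f x * chi S x) * (∑ y : Fin n → Bool, f y * chi S y))
        / ((2:ℝ) ^ n * 2 ^ n) := Finset.sum_congr rfl fun S _ => hrw S
    _ = 1 := by rw [← Finset.sum_div, key]; field_simp

lemma fcoef_empty {n : ℕ} (f : (Fin n → Bool) → ℝ) :
    fcoef f ∅ = (∑ x : Fin n → Bool, f x) / 2 ^ n := by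
  rw [fcoef, expec]
  congr 1
  apply Finset.sum_congr rfl
  intro x _
  rw [chi, Finset.prod_empty, mul_one]

lemma fcoef_bound {n : ℕ} (f : (Fin n → Bool) → ℝ) (hf : ∀ x, f x = 1 ∨ f x = -1)
    (S : Finset (Fin n)) (hS : S ≠ ∅) :
    |fcoef f S| ≤ 1 - fcoef f ∅ ∧ |fcoef f S| ≤ 1 + fcoef f ∅ := by
  have hpow : (0:ℝ) < 2 ^ n := by positivity
  have hchi := sum_chi S hS
  have habs : ∀ c : ℝ, (∀ x, |f x + c| = 1 + c * f x) →
      |fcoef f S| ≤ 1 + c * fcoef f ∅ := by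
    intro c hc
    have h1 : ∑ x : Fin n → Bool, f x * chi S x
        = ∑ x : Fin n → Bool, (f x + c) * chi S x := by
      rw [Finset.sum_congr rfl (fun x _ => by ring :
        ∀ x ∈ Finset.univ, (f x + c) * chi S x = f x * chi S x + c * chi S x)]
      rw [Finset.sum_add_distrib, ← Finset.mul_sum, hchi]
      ring
    have h2 : |∑ x : Fin n → Bool, (f x + c) * chi S x|
        ≤ ∑ x : Fin n → Bool, (1 + c * f x) := by
      refine le_trans (Finset.abs_sum_le_sum_abs _ _) ?_
      apply Finset.sum_le_sum
      intro x _
      rw [abs_mul, abs_chi, mul_one, hc x]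
    have h3 : ∑ x : Fin n → Bool, (1 + c * f x)
        = 2 ^ n + c * ∑ x : Fin n → Bool, f x := by
      rw [Finset.sum_add_distrib, ← Finset.mul_sum, Finset.sum_const]
      simp [Fintype.card_fun]
    rw [fcoef, expec, abs_div, abs_of_pos hpow, fcoef_empty]
    rw [div_le_iff₀ hpow]
    calc |∑ x : Fin n → Bool, f x * chi S x|
        = |∑ x : Fin n → Bool, (f x + c) * chi S x| := by rw [h1]
      _ ≤ 2 ^ n + c * ∑ x : Fin n → Bool, f x := h2.trans (le_of_eq h3)
      _ = (1 + c * ((∑ x : Fin n → Bool, f x) / 2 ^ n)) * 2 ^ n := by field_simp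
  constructor
  · have := habs (-1) (fun x => by rcases hf x with h | h <;> rw [h] <;> norm_num)
    linarith [this]
  · have := habs 1 (fun x => by rcases hf x with h | h <;> rw [h] <;> norm_num)
    linarith [this]

-- geometric sum bound
lemma geom_nat_bound {n : ℕ} (hn : 3 ≤ n) : ∀ K : ℕ, 2 * (∑ k ∈ Finset.range K, n ^ k) ≤ n ^ K := by
  intro K
  induction K with
  | zero => simp
  | succ K ih =>
    rw [Finset.sum_range_succ, pow_succ]
    have h1 : 2 * n ^ K ≤ n ^ K * n := by nlinarith [Nat.one_le_two_pow (n := K), pow_pos (show 0 < n by omega) K]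
    nlinarith [pow_pos (show 0 < n by omega) K]

-- count of small nonempty sets
lemma card_small_sets {n K : ℕ} :
    ((Finset.univ.erase (∅ : Finset (Fin n))).filter (fun S => S.card < K)).card
      ≤ ∑ k ∈ Finset.range K, n ^ k := by
  have hsub : ((Finset.univ.erase (∅ : Finset (Fin n))).filter (fun S => S.card < K))
      ⊆ (Finset.range K).biUnion (fun k => Finset.powersetCard k Finset.univ) := by
    intro S hS
    rw [Finset.mem_filter] at hS
    rw [Finset.mem_biUnion]
    exact ⟨S.card, Finset.mem_range.2 hS.2, Finset.mem_powersetCard.2 ⟨Finset.subset_univ S, rfl⟩⟩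
  calc _ ≤ _ := Finset.card_le_card hsub
    _ ≤ ∑ k ∈ Finset.range K, (Finset.powersetCard k (Finset.univ : Finset (Fin n))).card :=
        Finset.card_biUnion_le
    _ ≤ ∑ k ∈ Finset.range K, n ^ k := by
        apply Finset.sum_le_sum
        intro k _
        rw [Finset.card_powersetCard, Finset.card_univ, Fintype.card_fin]
        exact Nat.choose_le_pow n k

-- Gibbs per-term inequality
lemma gibbs_term (t q : ℝ) (ht : 0 ≤ t) (hq : 0 < q) :
    t * Real.logb 2 (1 / t) ≤ t * Real.logb 2 (1 / q) + (q - t) / Real.log 2 := by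
  rcases eq_or_lt_of_le ht with h | h
  · rw [← h]
    simp
    positivity
  · have hlog2 : (0:ℝ) < Real.log 2 := Real.log_pos (by norm_num)
    have key : t * Real.logb 2 (1 / t) - t * Real.logb 2 (1 / q) = t * Real.log (q / t) / Real.log 2 := by
      rw [Real.logb, Real.logb, one_div, one_div, Real.log_inv, Real.log_inv,
        Real.log_div (ne_of_gt hq) (ne_of_gt h)]
      field_simp
      ring
    have h2 : Real.log (q / t) ≤ q / t - 1 := Real.log_le_sub_one_of_pos (by positivity)
    have h3 : t * Real.log (q / t) ≤ q - t := by
      calc t * Real.log (q / t) ≤ t * (q / t - 1) := by nlinarith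
        _ = q - t := by field_simp
    have h4 : t * Real.log (q / t) / Real.log 2 ≤ (q - t) / Real.log 2 :=
      div_le_div_of_nonneg_right h3 hlog2.le
    linarith [key, h4]

set_option maxHeartbeats 2000000 in
lemma vlog_bound {n : ℕ} (hn : 3 ≤ n) (t : Finset (Fin n) → ℝ) (ht : ∀ S, 0 ≤ t S)
    (V : ℝ) (hVdef : V = ∑ S ∈ Finset.univ.erase ∅, t S)
    (hsmall : ∀ S : Finset (Fin n), S ≠ ∅ → t S ≤ V ^ 2)
    (hV : 0 < V) (hV1 : V ≤ 1) :
    V * Real.logb 2 (1 / V) ≤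
      4 * Real.logb 2 n * ∑ S : Finset (Fin n), (S.card : ℝ) * t S := by
  classical
  set I := ∑ S : Finset (Fin n), (S.card : ℝ) * t S with hI
  have hn1 : (1:ℝ) < n := by exact_mod_cast (by omega : 1 < n)
  have hn0 : (0:ℝ) < n := by linarith
  have hlogn : 0 < Real.logb 2 n := Real.logb_pos (by norm_num) hn1
  have hInonneg : 0 ≤ I := Finset.sum_nonneg fun S _ => mul_nonneg (by positivity) (ht S)
  have hVI : V ≤ I := by
    rw [hVdef, hI]
    refine le_trans (Finset.sum_le_sum ?_) (Finset.sum_le_sum_of_subset_of_nonneg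
      (Finset.erase_subset _ _) (fun S _ _ => mul_nonneg (by positivity) (ht S)))
    intro S hS
    have hSne : S ≠ ∅ := Finset.ne_of_mem_erase hS
    have : (1:ℝ) ≤ S.card := by
      have := Finset.card_pos.2 (Finset.nonempty_iff_ne_empty.2 hSne)
      exact_mod_cast this
    nlinarith [ht S]
  rcases le_or_gt (1 / V) ((n:ℝ) ^ 2) with hcase | hcase
  · -- easy case
    have h1 : Real.logb 2 (1 / V) ≤ Real.logb 2 ((n:ℝ) ^ 2) :=
      Real.logb_le_logb_of_le (by norm_num) (by positivity) hcase
    have h2 : Real.logb 2 ((n:ℝ) ^ 2) = 2 * Real.logb 2 n := by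
      rw [Real.logb_pow]; norm_num
    have h3 : 0 ≤ Real.logb 2 (1 / V) := Real.logb_nonneg (by norm_num) (by
      rw [le_div_iff₀ hV]; linarith)
    nlinarith
  · -- main case
    set L := Real.logb n (1 / V) with hL
    have hlogn' : 0 < Real.log n := Real.log_pos hn1
    have hL2 : 2 ≤ L := by
      have h := Real.logb_le_logb_of_le hn1 (by positivity) hcase.le
      rwa [Real.logb_pow, Real.logb_self_eq_one hn1, mul_one] at h
    obtain ⟨K, hKL, hKub⟩ : ∃ K : ℕ, (K:ℝ) ≤ L ∧ L < (K:ℝ) + 1 :=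
      ⟨⌊L⌋₊, Nat.floor_le (by linarith), Nat.lt_floor_add_one L⟩
    have hKL2 : L / 2 ≤ (K:ℝ) := by linarith
    have hpowK : (n:ℝ) ^ K ≤ 1 / V := by
      have h1 : (n:ℝ) ^ (K:ℝ) ≤ (n:ℝ) ^ L :=
        Real.rpow_le_rpow_of_exponent_le (le_of_lt hn1) hKL
      rw [hL, Real.rpow_logb hn0 (by linarith) (by positivity)] at h1
      rwa [Real.rpow_natCast] at h1
    -- mass bound
    set A := (Finset.univ.erase (∅ : Finset (Fin n))).filter (fun S => S.card < K) with hA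
    have hmass : ∑ S ∈ A, t S ≤ V / 2 := by
      have h1 : ∑ S ∈ A, t S ≤ (A.card : ℝ) * V ^ 2 := by
        calc ∑ S ∈ A, t S ≤ ∑ S ∈ A, V ^ 2 := by
              apply Finset.sum_le_sum
              intro S hS
              rw [hA, Finset.mem_filter] at hS
              exact hsmall S (Finset.ne_of_mem_erase hS.1)
          _ = (A.card : ℝ) * V ^ 2 := by rw [Finset.sum_const, nsmul_eq_mul]
      have h2 : (A.card : ℝ) ≤ (∑ k ∈ Finset.range K, (n:ℝ) ^ k) := by
        have h := card_small_sets (n := n) (K := K)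
        calc (A.card : ℝ) ≤ ((∑ k ∈ Finset.range K, n ^ k : ℕ) : ℝ) := by exact_mod_cast h
          _ = ∑ k ∈ Finset.range K, (n:ℝ) ^ k := by push_cast; ring
      have h3 : 2 * (∑ k ∈ Finset.range K, (n:ℝ) ^ k) ≤ (n:ℝ) ^ K := by
        have h := geom_nat_bound hn K
        calc 2 * (∑ k ∈ Finset.range K, (n:ℝ) ^ k)
            = ((2 * ∑ k ∈ Finset.range K, n ^ k : ℕ) : ℝ) := by push_cast; ring
          _ ≤ ((n ^ K : ℕ) : ℝ) := by exact_mod_cast h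
          _ = (n:ℝ) ^ K := by push_cast; ring
      have h4 : (n:ℝ) ^ K * V ≤ 1 := by
        rw [← le_div_iff₀ hV]
        exact hpowK
      calc ∑ S ∈ A, t S ≤ (A.card : ℝ) * V ^ 2 := h1
        _ ≤ ((n:ℝ) ^ K / 2) * V ^ 2 := by nlinarith [sq_nonneg V]
        _ ≤ V / 2 := by nlinarith [pow_pos hn0 K]
    -- rest
    set B := (Finset.univ.erase (∅ : Finset (Fin n))).filter (fun S => ¬ S.card < K) with hB
    have hsplit : ∑ S ∈ A, t S + ∑ S ∈ B, t S = V := by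
      rw [hA, hB, Finset.sum_filter_add_sum_filter_not, hVdef]
    have hrestV : V / 2 ≤ ∑ S ∈ B, t S := by linarith
    have hIrest : (K:ℝ) * ∑ S ∈ B, t S ≤ I := by
      have e1 : (K:ℝ) * ∑ S ∈ B, t S = ∑ S ∈ B, (K:ℝ) * t S := by rw [Finset.mul_sum]
      have e2 : ∑ S ∈ B, (K:ℝ) * t S ≤ ∑ S ∈ B, (S.card : ℝ) * t S := by
        apply Finset.sum_le_sum
        intro S hS
        rw [hB, Finset.mem_filter] at hS
        have hc : (K:ℝ) ≤ S.card := by exact_mod_cast Nat.le_of_not_lt hS.2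
        exact mul_le_mul_of_nonneg_right hc (ht S)
      have e3 : ∑ S ∈ B, (S.card : ℝ) * t S ≤ I := by
        rw [hI]
        exact Finset.sum_le_univ_sum_of_nonneg
          (fun S => mul_nonneg (by positivity) (ht S))
      linarith
    have hIL : L * V / 4 ≤ I := by
      have h5 : L / 2 * (V / 2) ≤ (K:ℝ) * ∑ S ∈ B, t S := by
        apply mul_le_mul hKL2 hrestV (by linarith) (by linarith)
      linarith
    -- conclude
    have hchain : Real.logb 2 (1 / V) = Real.logb 2 n * L := by
      rw [hL, Real.logb, Real.logb, Real.logb]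
      field_simp
    rw [hchain]
    have hL0 : 0 ≤ L := by linarith
    nlinarith [mul_le_mul_of_nonneg_left hIL (le_of_lt hlogn)]

set_option maxHeartbeats 2000000 in
lemma entropy_est {n : ℕ} (hn : 3 ≤ n) (t : Finset (Fin n) → ℝ)
    (ht : ∀ S, 0 ≤ t S) (hsum : ∑ S : Finset (Fin n), t S = 1)
    (hsmall : ∀ S : Finset (Fin n), S ≠ ∅ →
      t S ≤ (∑ S' ∈ Finset.univ.erase ∅, t S') ^ 2) :
    ∑ S : Finset (Fin n), t S * Real.logb 2 (1 / t S) ≤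
      100 * Real.logb 2 n * ∑ S : Finset (Fin n), (S.card : ℝ) * t S := by
  have hn1 : (1:ℝ) < n := by exact_mod_cast (by omega : 1 < n)
  have hn0 : (0:ℝ) < n := by linarith
  have hlog2 : (0:ℝ) < Real.log 2 := Real.log_pos (by norm_num)
  have hlog2' : (1:ℝ)/2 ≤ Real.log 2 := by
    have := Real.log_two_gt_d9
    linarith
  have hlogn1 : 1 ≤ Real.logb 2 n := by
    rw [show (1:ℝ) = Real.logb 2 2 from (Real.logb_self_eq_one (by norm_num)).symm]
    exact Real.logb_le_logb_of_le (by norm_num) (by norm_num)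
      (by exact_mod_cast (by omega : 2 ≤ n))
  set V := ∑ S' ∈ Finset.univ.erase (∅ : Finset (Fin n)), t S' with hVdef
  set I := ∑ S : Finset (Fin n), (S.card : ℝ) * t S with hI
  have hInonneg : 0 ≤ I := Finset.sum_nonneg fun S _ => mul_nonneg (by positivity) (ht S)
  have hV0 : 0 ≤ V := Finset.sum_nonneg fun S _ => ht S
  have hsplit : t ∅ + V = 1 := by
    rw [hVdef, Finset.add_sum_erase _ t (Finset.mem_univ ∅), hsum]
  have hV1 : V ≤ 1 := by linarith [ht ∅]
  have hVI : V ≤ I := by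
    rw [hVdef, hI]
    refine le_trans (Finset.sum_le_sum ?_) (Finset.sum_le_sum_of_subset_of_nonneg
      (Finset.erase_subset _ _) (fun S _ _ => mul_nonneg (by positivity) (ht S)))
    intro S hS
    have hSne : S ≠ ∅ := Finset.ne_of_mem_erase hS
    have h1 : (1:ℝ) ≤ S.card := by
      have := Finset.card_pos.2 (Finset.nonempty_iff_ne_empty.2 hSne)
      exact_mod_cast this
    nlinarith [ht S]
  have hIempty : ∑ S ∈ Finset.univ.erase (∅ : Finset (Fin n)), (S.card : ℝ) * t S = I := by
    rw [hI, ← Finset.add_sum_erase _ (fun S => (S.card : ℝ) * t S) (Finset.mem_univ ∅)]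
    simp
  rcases eq_or_lt_of_le hV0 with hVz | hVpos
  · -- V = 0
    have hzero : ∀ S ∈ Finset.univ.erase (∅ : Finset (Fin n)), t S = 0 := by
      intro S hS
      exact (Finset.sum_eq_zero_iff_of_nonneg (fun S _ => ht S)).1 hVz.symm S hS
    have htE : t ∅ = 1 := by
      have h0 : V = 0 := hVz.symm
      linarith
    have hLHS : ∑ S : Finset (Fin n), t S * Real.logb 2 (1 / t S) = 0 := by
      apply Finset.sum_eq_zero
      intro S _
      by_cases hS : S = ∅
      · subst hS; rw [htE]; simp
      · rw [hzero S (Finset.mem_erase.2 ⟨hS, Finset.mem_univ S⟩)]; simp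
    have hRHS : I = 0 := by
      rw [hI]
      apply Finset.sum_eq_zero
      intro S _
      by_cases hS : S = ∅
      · subst hS; simp
      · rw [hzero S (Finset.mem_erase.2 ⟨hS, Finset.mem_univ S⟩)]; simp
    rw [hLHS, hRHS]
    simp
  · -- V > 0
    set c : ℝ := ((n:ℝ) ^ 2)⁻¹ with hc
    have hc0 : 0 < c := by rw [hc]; positivity
    set q : Finset (Fin n) → ℝ :=
      fun S => if S = ∅ then 1 - V / 2 else V / 2 * c ^ S.card with hq
    have hqpos : ∀ S, 0 < q S := by
      intro S
      simp only [hq]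
      by_cases hS : S = ∅
      · rw [if_pos hS]; linarith
      · rw [if_neg hS]
        exact mul_pos (by linarith) (pow_pos hc0 _)
    have hqE : q ∅ = 1 - V / 2 := by simp only [hq, if_pos]
    have hgeom : ∑ S ∈ Finset.univ.erase (∅ : Finset (Fin n)), c ^ S.card ≤ 1 := by
      have hall : ∑ S : Finset (Fin n), c ^ S.card = (c + 1) ^ n := by
        rw [show ((c + 1) ^ n : ℝ) = ∏ _i : Fin n, (c + 1) by
          rw [Finset.prod_const]; simp]
        rw [Finset.prod_add]
        rw [← Finset.powerset_univ]
        apply Finset.sum_congr rfl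
        intro S _
        rw [Finset.prod_const, Finset.prod_const, one_pow, mul_one]
      have hexp : (c + 1) ^ n ≤ 2 := by
        have h1 : c + 1 ≤ Real.exp c := by
          have := Real.add_one_le_exp c
          linarith
        have h2 : (c + 1) ^ n ≤ Real.exp c ^ n :=
          pow_le_pow_left₀ (by linarith) h1 n
        have h3 : Real.exp c ^ n = Real.exp ((n:ℝ) * c) := (Real.exp_nat_mul c n).symm
        have h4 : (n:ℝ) * c = 1 / n := by
          rw [hc]
          field_simp
        have h5 : Real.exp ((n:ℝ) * c) ≤ Real.exp (Real.log 2) := by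
          apply Real.exp_le_exp.2
          rw [h4]
          have h6 : (1:ℝ)/n ≤ 1/3 := by
            apply div_le_div_of_nonneg_left (by norm_num) (by norm_num)
            exact_mod_cast hn
          linarith
        rw [Real.exp_log (by norm_num)] at h5
        calc (c + 1) ^ n ≤ Real.exp c ^ n := h2
          _ = Real.exp ((n:ℝ) * c) := h3
          _ ≤ 2 := h5
      have herase : ∑ S ∈ Finset.univ.erase (∅ : Finset (Fin n)), c ^ S.card
          = (∑ S : Finset (Fin n), c ^ S.card) - 1 := by
        rw [← Finset.add_sum_erase Finset.univ (fun S : Finset (Fin n) => c ^ S.card) (Finset.mem_univ ∅)]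
        simp
      rw [herase, hall]
      linarith
    have hQ : ∑ S : Finset (Fin n), q S ≤ 1 := by
      rw [← Finset.add_sum_erase _ q (Finset.mem_univ ∅)]
      have h2 : ∑ S ∈ Finset.univ.erase (∅ : Finset (Fin n)), q S
          = V / 2 * ∑ S ∈ Finset.univ.erase (∅ : Finset (Fin n)), c ^ S.card := by
        rw [Finset.mul_sum]
        apply Finset.sum_congr rfl
        intro S hS
        rw [hq]
        simp only [if_neg (Finset.ne_of_mem_erase hS)]
      rw [hqE, h2]
      nlinarith [hgeom]
    -- Gibbs
    have hGibbs : ∑ S : Finset (Fin n), t S * Real.logb 2 (1 / t S)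
        ≤ ∑ S : Finset (Fin n), t S * Real.logb 2 (1 / q S) := by
      have step : ∑ S : Finset (Fin n), t S * Real.logb 2 (1 / t S)
          ≤ ∑ S : Finset (Fin n), (t S * Real.logb 2 (1 / q S) + (q S - t S) / Real.log 2) :=
        Finset.sum_le_sum fun S _ => gibbs_term (t S) (q S) (ht S) (hqpos S)
      have expand : ∑ S : Finset (Fin n), (t S * Real.logb 2 (1 / q S) + (q S - t S) / Real.log 2)
          = (∑ S : Finset (Fin n), t S * Real.logb 2 (1 / q S))
            + ((∑ S : Finset (Fin n), q S) - 1) / Real.log 2 := by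
        rw [Finset.sum_add_distrib]
        congr 1
        rw [← Finset.sum_div, Finset.sum_sub_distrib, hsum]
      have hcorr : ((∑ S : Finset (Fin n), q S) - 1) / Real.log 2 ≤ 0 :=
        div_nonpos_of_nonpos_of_nonneg (by linarith) hlog2.le
      calc ∑ S : Finset (Fin n), t S * Real.logb 2 (1 / t S)
          ≤ ∑ S : Finset (Fin n), (t S * Real.logb 2 (1 / q S) + (q S - t S) / Real.log 2) := step
        _ = (∑ S : Finset (Fin n), t S * Real.logb 2 (1 / q S))
            + ((∑ S : Finset (Fin n), q S) - 1) / Real.log 2 := expand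
        _ ≤ ∑ S : Finset (Fin n), t S * Real.logb 2 (1 / q S) := by linarith
    -- splitting the reference sum
    have hsplitq : ∑ S : Finset (Fin n), t S * Real.logb 2 (1 / q S)
        = t ∅ * Real.logb 2 (1 / (1 - V / 2))
          + ∑ S ∈ Finset.univ.erase (∅ : Finset (Fin n)), t S * Real.logb 2 (1 / q S) := by
      rw [← Finset.add_sum_erase _ (fun S => t S * Real.logb 2 (1 / q S)) (Finset.mem_univ ∅),
        hqE]
    have hpos1 : (0:ℝ) < 1 - V / 2 := by linarith
    have hAterm : t ∅ * Real.logb 2 (1 / (1 - V / 2)) ≤ 2 * V := by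
      have harg : (1:ℝ) ≤ 1 / (1 - V / 2) := by
        rw [le_div_iff₀ hpos1]
        linarith
      have hlb0 : 0 ≤ Real.logb 2 (1 / (1 - V / 2)) := Real.logb_nonneg (by norm_num) harg
      have hlogle : Real.log (1 / (1 - V / 2)) ≤ V := by
        have h := Real.log_le_sub_one_of_pos (x := 1/(1 - V/2)) (by positivity)
        have h2 : 1 / (1 - V/2) - 1 ≤ V := by
          rw [div_sub_one (ne_of_gt hpos1), div_le_iff₀ hpos1]
          nlinarith
        linarith
      have hlbV : Real.logb 2 (1 / (1 - V / 2)) ≤ 2 * V := by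
        rw [Real.logb, div_le_iff₀ hlog2]
        nlinarith
      have ht1 : t ∅ ≤ 1 := by linarith
      nlinarith [ht ∅]
    -- the B part
    have hBsum : ∑ S ∈ Finset.univ.erase (∅ : Finset (Fin n)), t S * Real.logb 2 (1 / q S)
        = Real.logb 2 (2 / V) * V + 2 * Real.logb 2 n * I := by
      have hterm : ∀ S ∈ Finset.univ.erase (∅ : Finset (Fin n)),
          t S * Real.logb 2 (1 / q S)
          = Real.logb 2 (2 / V) * t S + 2 * Real.logb 2 n * ((S.card : ℝ) * t S) := by
        intro S hS
        have hSne := Finset.ne_of_mem_erase hS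
        have hqS : q S = V / 2 * c ^ S.card := by
          simp only [hq]; rw [if_neg hSne]
        have hinv : 1 / q S = 2 / V * ((n:ℝ) ^ 2) ^ S.card := by
          rw [hqS, hc]
          rw [one_div, mul_inv, inv_pow, inv_inv]
          congr 1
          rw [div_eq_mul_inv, mul_inv, inv_inv, div_eq_mul_inv]
          ring
        have e1 : Real.logb 2 (1 / q S)
            = Real.logb 2 (2 / V) + (S.card : ℝ) * (2 * Real.logb 2 n) := by
          rw [hinv, Real.logb_mul (by positivity) (by positivity), Real.logb_pow,
            Real.logb_pow]
          push_cast
          ring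
        rw [e1]
        ring
      rw [Finset.sum_congr rfl hterm, Finset.sum_add_distrib, ← Finset.mul_sum,
        ← Finset.mul_sum, hIempty, ← hVdef]
    have hlogb2V : Real.logb 2 (2 / V) = 1 + Real.logb 2 (1 / V) := by
      rw [Real.logb_div (by norm_num) (ne_of_gt hVpos), one_div, Real.logb_inv,
        Real.logb_self_eq_one (by norm_num)]
      ring
    have hVlog : V * Real.logb 2 (1 / V) ≤ 4 * Real.logb 2 n * I :=
      vlog_bound hn t ht V hVdef hsmall hVpos hV1
    have h9 : I ≤ Real.logb 2 n * I := by nlinarith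
    have hfinal : ∑ S : Finset (Fin n), t S * Real.logb 2 (1 / q S)
        ≤ 100 * Real.logb 2 n * I := by
      rw [hsplitq, hBsum, hlogb2V]
      have hexpand : (1 + Real.logb 2 (1 / V)) * V = V + V * Real.logb 2 (1 / V) := by ring
      nlinarith [hAterm, hVlog, hVI, h9, hInonneg, hlogn1]
    calc ∑ S : Finset (Fin n), t S * Real.logb 2 (1 / t S)
        ≤ ∑ S : Finset (Fin n), t S * Real.logb 2 (1 / q S) := hGibbs
      _ ≤ 100 * Real.logb 2 n * I := hfinal

/-- Fourier entropy is at most O(log n) times total influence. -/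
theorem entropy_log_influence : ∃ c : ℝ, 0 < c ∧
    ∀ (n : ℕ), 3 ≤ n → ∀ f : (Fin n → Bool) → ℝ, (∀ x, f x = 1 ∨ f x = -1) →
      ∑ S : Finset (Fin n), fcoef f S ^ 2 * Real.logb 2 (1 / fcoef f S ^ 2) ≤
        c * Real.logb 2 n *
          ∑ S : Finset (Fin n), (S.card : ℝ) * fcoef f S ^ 2 := by
  refine ⟨100, by norm_num, ?_⟩
  intro n hn f hf
  have hsq : ∀ x, f x ^ 2 = 1 := fun x => by rcases hf x with h | h <;> rw [h] <;> norm_num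
  have hpars := parseval f hsq
  have hVsplit : fcoef f ∅ ^ 2 + ∑ S' ∈ Finset.univ.erase (∅ : Finset (Fin n)),
      fcoef f S' ^ 2 = 1 := by
    rw [Finset.add_sum_erase Finset.univ (fun S : Finset (Fin n) => fcoef f S ^ 2)
      (Finset.mem_univ ∅), hpars]
  have hsmall : ∀ S : Finset (Fin n), S ≠ ∅ →
      fcoef f S ^ 2 ≤ (∑ S' ∈ Finset.univ.erase (∅ : Finset (Fin n)), fcoef f S' ^ 2) ^ 2 := by
    intro S hS
    set m := fcoef f ∅ with hm
    have hVm : ∑ S' ∈ Finset.univ.erase (∅ : Finset (Fin n)), fcoef f S' ^ 2 = 1 - m ^ 2 := by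
      linarith
    obtain ⟨hb1, hb2⟩ := fcoef_bound f hf S hS
    have hVnonneg : (0:ℝ) ≤ 1 - m ^ 2 := by
      rw [← hVm]
      exact Finset.sum_nonneg fun S' _ => sq_nonneg _
    have hm1 : -1 ≤ m := by nlinarith
    have hm2 : m ≤ 1 := by nlinarith
    have habs : |fcoef f S| ≤ 1 - m ^ 2 := by
      rcases le_or_gt m 0 with h | h
      · nlinarith [abs_nonneg (fcoef f S)]
      · nlinarith [abs_nonneg (fcoef f S)]
    rw [hVm]
    calc fcoef f S ^ 2 = |fcoef f S| ^ 2 := (sq_abs _).symm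
      _ ≤ (1 - m ^ 2) ^ 2 := by nlinarith [abs_nonneg (fcoef f S)]
  exact entropy_est hn (fun S => fcoef f S ^ 2) (fun S => sq_nonneg _) hpars hsmall
end
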